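/- arXiv:math/0409235 — 6 statements merged into one kernel-verified Lean document; each statement's English description precedes it below -/
import Mathlib

section
/- Let F be a finite family of subsets of [n], each of cardinality at least 2. Then F is a laminar family (any two members are disjoint or one contains the other) if and only if for every subfamily A ⊆ F with |A| ≥ 2 whose members are pairwise incomparable under inclusion, the join ⋁_{S∈A} π_S in the partition lattice Π_n has at least two non-singleton blocks, i.e., is not of the form π_T for any subset T of [n]. (This says: F is nested with respect to the minimal building set of Π_n if and only if F is laminar.) -/
/-- The partition of `Fin n` whose unique (potentially) non-singleton block is `S`. -/
def piS (n : ℕ) (S : Set (Fin n)) : Setoid (Fin n) where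
  r x y := x = y ∨ (x ∈ S ∧ y ∈ S)
  iseqv := by
    constructor
    · intro x; exact Or.inl rfl
    · rintro x y (rfl | ⟨hx, hy⟩)
      · exact Or.inl rfl
      · exact Or.inr ⟨hy, hx⟩
    · rintro x y z (rfl | ⟨hx, hy⟩) (rfl | ⟨hy', hz⟩)
      · exact Or.inl rfl
      · exact Or.inr ⟨hy', hz⟩
      · exact Or.inr ⟨hx, hy⟩
      · exact Or.inr ⟨hx, hz⟩

lemma piS_rel {n : ℕ} {S : Set (Fin n)} {x y : Fin n} :
    (piS n S) x y ↔ x = y ∨ (x ∈ S ∧ y ∈ S) := Iff.rfl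

lemma piS_le {n : ℕ} {S : Set (Fin n)} {r : Setoid (Fin n)}
    (h : ∀ x ∈ S, ∀ y ∈ S, r x y) : piS n S ≤ r := by
  rw [Setoid.le_def]
  rintro x y (rfl | ⟨hx, hy⟩)
  · exact r.refl x
  · exact h x hx y hy

/-- The sup of `piS` over a pairwise disjoint family. -/
lemma sup_piS_disjoint {n : ℕ} (A : Finset (Finset (Fin n)))
    (hd : ∀ S ∈ A, ∀ T ∈ A, S ≠ T → Disjoint S T) :
    A.sup (fun S => piS n ↑S) =
      ⟨fun x y => x = y ∨ ∃ S ∈ A, x ∈ S ∧ y ∈ S, by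
        constructor
        · intro x; exact Or.inl rfl
        · rintro x y (rfl | ⟨S, hS, hx, hy⟩)
          · exact Or.inl rfl
          · exact Or.inr ⟨S, hS, hy, hx⟩
        · rintro x y z (rfl | ⟨S, hS, hx, hy⟩) (rfl | ⟨S', hS', hy', hz⟩)
          · exact Or.inl rfl
          · exact Or.inr ⟨S', hS', hy', hz⟩
          · exact Or.inr ⟨S, hS, hx, hy⟩
          · refine Or.inr ⟨S, hS, hx, ?_⟩
            by_cases hSS : S = S'
            · exact hSS ▸ hz
            · exact absurd (hd S hS S' hS' hSS) (Finset.not_disjoint_iff.2 ⟨y, hy, hy'⟩)⟩ := by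
  apply le_antisymm
  · apply Finset.sup_le
    intro S hS
    exact piS_le fun x hx y hy => Or.inr ⟨S, hS, hx, hy⟩
  · rw [Setoid.le_def]
    rintro x y (rfl | ⟨S, hS, hx, hy⟩)
    · exact (A.sup fun S => piS n ↑S).refl x
    · have hle := Finset.le_sup (f := fun U : Finset (Fin n) => piS n (↑U : Set (Fin n))) hS
      exact Setoid.le_def.1 hle (Or.inr ⟨hx, hy⟩)

/-- A finite family `F` of subsets of `[n]`, each of cardinality at least `2`, is laminar
(any two members are disjoint or one contains the other) if and only if for every subfamily
`A ⊆ F` with `|A| ≥ 2` whose members are pairwise incomparable under inclusion, the join of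
the partitions `π_S`, `S ∈ A`, in the partition lattice `Π_n` is not of the form `π_T` for
any `T ⊆ [n]`. -/
theorem laminar_iff_nested (n : ℕ) (F : Finset (Finset (Fin n)))
    (hF : ∀ S ∈ F, 2 ≤ S.card) :
    (∀ S ∈ F, ∀ T ∈ F, S ⊆ T ∨ T ⊆ S ∨ Disjoint S T) ↔
    (∀ A ⊆ F, 2 ≤ A.card → (∀ S ∈ A, ∀ T ∈ A, S ≠ T → ¬ S ⊆ T) →
      ∀ T : Set (Fin n), A.sup (fun S => piS n ↑S) ≠ piS n T) := by
  constructor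
  · intro hlam A hAF hA2 hanti T hsup
    have hd : ∀ S ∈ A, ∀ T ∈ A, S ≠ T → Disjoint S T := by
      intro S hS T' hT hne
      rcases hlam S (hAF hS) T' (hAF hT) with h | h | h
      · exact absurd h (hanti S hS T' hT hne)
      · exact absurd h (hanti T' hT S hS hne.symm)
      · exact h
    -- pick two distinct members
    obtain ⟨S₁, hS₁, S₂, hS₂, hne⟩ := Finset.one_lt_card.1 hA2
    obtain ⟨x₁, hx₁, y₁, hy₁, hxy₁⟩ := Finset.one_lt_card.1 (hF S₁ (hAF hS₁))
    obtain ⟨x₂, hx₂, y₂, hy₂, hxy₂⟩ := Finset.one_lt_card.1 (hF S₂ (hAF hS₂))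
    rw [sup_piS_disjoint A hd] at hsup
    have hrel : ∀ x y : Fin n, (x = y ∨ ∃ S ∈ A, x ∈ S ∧ y ∈ S) ↔ (piS n T) x y := by
      intro x y; rw [← hsup]; rfl
    have h1 : x₁ ∈ T ∧ y₁ ∈ T := by
      rcases (hrel x₁ y₁).1 (Or.inr ⟨S₁, hS₁, hx₁, hy₁⟩) with h | h
      · exact absurd h hxy₁
      · exact h
    have h2 : x₂ ∈ T ∧ y₂ ∈ T := by
      rcases (hrel x₂ y₂).1 (Or.inr ⟨S₂, hS₂, hx₂, hy₂⟩) with h | h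
      · exact absurd h hxy₂
      · exact h
    have hne12 : x₁ ≠ x₂ := by
      intro h
      exact (Finset.disjoint_left.1 (hd S₁ hS₁ S₂ hS₂ hne)) hx₁ (h ▸ hx₂)
    rcases (hrel x₁ x₂).2 (Or.inr ⟨h1.1, h2.1⟩) with h | ⟨S, hS, hxS, hxS'⟩
    · exact hne12 h
    · by_cases hSS₁ : S = S₁
      · subst hSS₁
        exact (Finset.disjoint_left.1 (hd S hS S₂ hS₂ hne)) hxS' hx₂
      · exact (Finset.disjoint_left.1 (hd S hS S₁ hS₁ hSS₁)) hxS hx₁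
  · intro hnest S hS T hT
    by_contra hcon
    push_neg at hcon
    obtain ⟨hST, hTS, hdisj⟩ := hcon
    have hne : S ≠ T := fun h => hST (h ▸ Finset.Subset.refl S)
    obtain ⟨z, hzS, hzT⟩ := Finset.not_disjoint_iff.1 hdisj
    apply hnest {S, T} (Finset.insert_subset_iff.2 ⟨hS, Finset.singleton_subset_iff.2 hT⟩)
      (by rw [Finset.card_insert_of_notMem (by simpa using hne), Finset.card_singleton])
      (by intro A hA B hB hAB
          simp only [Finset.mem_insert, Finset.mem_singleton] at hA hB
          rcases hA with rfl | rfl <;> rcases hB with rfl | rfl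
          · exact absurd rfl hAB
          · exact hST
          · exact hTS
          · exact absurd rfl hAB)
      (↑S ∪ ↑T)
    rw [Finset.sup_insert, Finset.sup_singleton]
    apply le_antisymm
    · apply sup_le
      · exact piS_le fun x hx y hy => Or.inr ⟨Or.inl hx, Or.inl hy⟩
      · exact piS_le fun x hx y hy => Or.inr ⟨Or.inr hx, Or.inr hy⟩
    · apply piS_le
      intro x hx y hy
      have hz : ∀ w : Fin n, w ∈ (↑S ∪ ↑T : Set (Fin n)) →
          (piS n ↑S ⊔ piS n ↑T) w z := by
        intro w hw
        rcases hw with hw | hw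
        · exact Setoid.le_def.1 le_sup_left (Or.inr ⟨hw, hzS⟩)
        · exact Setoid.le_def.1 le_sup_right (Or.inr ⟨hw, hzT⟩)
      exact (piS n ↑S ⊔ piS n ↑T).trans (hz x hx) ((piS n ↑S ⊔ piS n ↑T).symm (hz y hy))
end

section
/- For every maximal chain ⊥ = c_0 ⋖ c_1 ⋖ ⋯ ⋖ c_{n−1} = ⊤ of the partition lattice Π_n, the collection of all non-singleton blocks occurring in the partitions c_1, …, c_{n−1} is a laminar family with exactly n−1 distinct members, containing [n]; in particular it is a maximal laminar family of subsets of [n] of cardinality at least 2. (This is the support-simplex description: the maximal simplex of the reduced minimal nested set complex of Π_n supporting a maximal chain is the union of the sets of factors of its elements.) -/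
/-- The family of all non-singleton blocks occurring in the partitions `c 0, …, c (n-1)`. -/
def chainBlocks (n : ℕ) (c : ℕ → Setoid (Fin n)) : Set (Set (Fin n)) :=
  {B | ∃ i ≤ n - 1, B ∈ (c i).classes ∧ B.Nontrivial}

section Aux

variable {α : Type*}

open Classical in
/-- A representative of a set (junk if empty). -/
noncomputable def setRepr [Nonempty α] (B : Set α) : α :=
  if h : B.Nonempty then h.some else Classical.arbitrary α

theorem setRepr_mem [Nonempty α] {B : Set α} (h : B.Nonempty) : setRepr B ∈ B := by
  rw [setRepr, dif_pos h]; exact h.some_mem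

theorem classes_nonempty {r : Setoid α} {B : Set α} (hB : B ∈ r.classes) : B.Nonempty := by
  obtain ⟨y, rfl⟩ := hB
  exact ⟨y, r.refl' y⟩

/-- The r-class of any point of a class B is B itself. -/
theorem class_eq_of_mem {r : Setoid α} {B : Set α} (hB : B ∈ r.classes) {x : α} (hx : x ∈ B) :
    {y | r y x} = B :=
  Setoid.eq_of_mem_classes (r.mem_classes x) (r.refl' x) hB hx

theorem class_subset_of_le {r s : Setoid α} (h : r ≤ s) {B : Set α} (hB : B ∈ s.classes)
    {x : α} (hx : x ∈ B) : {y | r y x} ⊆ B := by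
  rw [← class_eq_of_mem hB hx]
  exact fun y hy => h hy

/-- The subclass-representative map. -/
noncomputable def subRep [Nonempty α] (r : Setoid α) (B : Set α) : Set α :=
  {y | r y (setRepr B)}

theorem subRep_mem_classes [Nonempty α] (r : Setoid α) (B : Set α) :
    subRep r B ∈ r.classes := r.mem_classes _

theorem subRep_subset [Nonempty α] {r s : Setoid α} (h : r ≤ s) {B : Set α}
    (hB : B ∈ s.classes) : subRep r B ⊆ B :=
  class_subset_of_le h hB (setRepr_mem (classes_nonempty hB))

theorem subRep_nonempty [Nonempty α] (r : Setoid α) (B : Set α) : (subRep r B).Nonempty :=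
  ⟨setRepr B, r.refl' _⟩

theorem subRep_injOn [Nonempty α] {r s : Setoid α} (h : r ≤ s) :
    Set.InjOn (subRep r) s.classes := by
  intro B1 h1 B2 h2 heq
  obtain ⟨x, hx⟩ := subRep_nonempty r B1
  have hx1 : x ∈ B1 := subRep_subset h h1 hx
  have hx2 : x ∈ B2 := subRep_subset h h2 (heq ▸ hx)
  exact Setoid.eq_of_mem_classes h1 hx1 h2 hx2

theorem classes_finite [Finite α] (r : Setoid α) : r.classes.Finite := Set.toFinite _

/-- Monotone map decreases number of classes. -/
theorem ncard_classes_le [Finite α] [Nonempty α] {r s : Setoid α} (h : r ≤ s) :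
    s.classes.ncard ≤ r.classes.ncard :=
  Set.ncard_le_ncard_of_injOn (subRep r)
    (fun _ _ => subRep_mem_classes r _) (subRep_injOn h) (classes_finite r)

/-- Strictly monotone map strictly decreases number of classes. -/
theorem ncard_classes_lt [Finite α] [Nonempty α] {r s : Setoid α} (h : r < s) :
    s.classes.ncard < r.classes.ncard := by
  obtain ⟨hle, hne⟩ := lt_iff_le_and_ne.mp h
  -- find a, b with s a b but ¬ r a b
  have hab : ∃ a b, s a b ∧ ¬ r a b := by
    by_contra hc
    push_neg at hc
    exact hne (le_antisymm hle (Setoid.le_def.mpr fun {x y} hxy => hc x y hxy))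
  obtain ⟨a, b, hsab, hrab⟩ := hab
  have hBs : {z | s z a} ∈ s.classes := s.mem_classes a
  have hbB : b ∈ {z | s z a} := s.symm' hsab
  have haB : a ∈ {z | s z a} := s.refl' a
  -- the r-classes of a and b are distinct subsets of the s-class
  have hane : ({y | r y a} : Set α) ≠ {y | r y b} := by
    intro hEq
    exact hrab (by have : a ∈ {y | r y b} := hEq ▸ r.refl' a; exact this)
  -- one of them differs from subRep r {z | s z a}
  have : ∃ D, D ∈ r.classes ∧ D ⊆ {z | s z a} ∧ D ≠ subRep r {z | s z a} := by
    rcases eq_or_ne ({y | r y a} : Set α) (subRep r {z | s z a}) with hEq | hNe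
    · exact ⟨{y | r y b}, r.mem_classes b, class_subset_of_le hle hBs hbB,
        fun hh => hane (hEq.trans hh.symm)⟩
    · exact ⟨{y | r y a}, r.mem_classes a, class_subset_of_le hle hBs haB, hNe⟩
  obtain ⟨D, hDr, hDsub, hDne⟩ := this
  have hDnotim : D ∉ subRep r '' s.classes := by
    rintro ⟨B', hB', rfl⟩
    obtain ⟨x, hx⟩ := subRep_nonempty r B'
    have : x ∈ B' := subRep_subset hle hB' hx
    have hBeq : B' = {z | s z a} :=
      Setoid.eq_of_mem_classes hB' this hBs (hDsub hx)
    exact hDne (by rw [hBeq])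
  have hss : subRep r '' s.classes ⊂ r.classes := by
    constructor
    · rintro _ ⟨B', _, rfl⟩; exact subRep_mem_classes r B'
    · exact fun hsub => hDnotim (hsub hDr)
  calc s.classes.ncard = (subRep r '' s.classes).ncard :=
        (Set.ncard_image_of_injOn (subRep_injOn hle)).symm
    _ < r.classes.ncard := Set.ncard_lt_ncard hss (classes_finite r)

/-- Existence of a new class. -/
theorem exists_new_class {r s : Setoid α} (h : r < s) :
    ∃ B ∈ s.classes, B ∉ r.classes := by
  by_contra hc
  push_neg at hc
  have hsr : s ≤ r := by
    rw [Setoid.le_def]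
    intro x y hxy
    have hB : {z | s z y} ∈ r.classes := hc _ (s.mem_classes y)
    obtain ⟨w, hw⟩ := hB
    have hxw : r x w := by
      have : x ∈ {z | s z y} := hxy
      rw [hw] at this; exact this
    have hyw : r y w := by
      have : y ∈ {z | s z y} := s.refl' y
      rw [hw] at this; exact this
    exact r.trans' hxw (r.symm' hyw)
  exact absurd (le_antisymm h.le hsr) h.ne

/-- A new class properly contains the old class of each of its points. -/
theorem new_class_proper {r s : Setoid α} (hle : r ≤ s) {B : Set α} (hB : B ∈ s.classes)
    (hnew : B ∉ r.classes) {x : α} (hx : x ∈ B) :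
    {y | r y x} ⊆ B ∧ {y | r y x} ≠ B := by
  refine ⟨class_subset_of_le hle hB hx, fun hEq => hnew ?_⟩
  rw [← hEq]; exact r.mem_classes x

/-- A new class is nontrivial. -/
theorem new_class_nontrivial {r s : Setoid α} (hle : r ≤ s) {B : Set α} (hB : B ∈ s.classes)
    (hnew : B ∉ r.classes) : B.Nontrivial := by
  obtain ⟨x, hx⟩ := classes_nonempty hB
  obtain ⟨hsub, hne⟩ := new_class_proper hle hB hnew hx
  obtain ⟨y, hyB, hyn⟩ := Set.exists_of_ssubset (ssubset_of_subset_of_ne hsub hne)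
  exact ⟨y, hyB, x, hx, fun hEq => hyn (hEq ▸ r.refl' x)⟩

/-- Uniqueness of the new class under the cardinality condition. -/
theorem new_class_unique [Finite α] [Nonempty α] {r s : Setoid α} (hle : r ≤ s)
    (hcard : r.classes.ncard ≤ s.classes.ncard + 1) {B1 B2 : Set α}
    (h1 : B1 ∈ s.classes) (h1n : B1 ∉ r.classes)
    (h2 : B2 ∈ s.classes) (h2n : B2 ∉ r.classes) : B1 = B2 := by
  by_contra hne
  have hdisj : Disjoint B1 B2 := by
    rw [Set.disjoint_left]
    intro x hx1 hx2
    exact hne (Setoid.eq_of_mem_classes h1 hx1 h2 hx2)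
  -- in each new class find an r-class different from its subRep
  have key : ∀ B, B ∈ s.classes → B ∉ r.classes →
      ∃ D, D ∈ r.classes ∧ D ⊆ B ∧ D ≠ subRep r B := by
    intro B hB hBn
    obtain ⟨x, hx⟩ := classes_nonempty hB
    obtain ⟨hsub, hne'⟩ := new_class_proper hle hB hBn hx
    obtain ⟨y, hyB, hyn⟩ := Set.exists_of_ssubset (ssubset_of_subset_of_ne hsub hne')
    have hxy : ({z | r z x} : Set α) ≠ {z | r z y} := by
      intro hEq
      exact hyn (by have : y ∈ {z | r z x} := hEq ▸ r.refl' y; exact this)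
    rcases eq_or_ne ({z | r z x} : Set α) (subRep r B) with hEq | hNe
    · exact ⟨{z | r z y}, r.mem_classes y, class_subset_of_le hle hB hyB,
        fun hh => hxy (hEq.trans hh.symm)⟩
    · exact ⟨{z | r z x}, r.mem_classes x, hsub, hNe⟩
  obtain ⟨D1, hD1r, hD1s, hD1ne⟩ := key B1 h1 h1n
  obtain ⟨D2, hD2r, hD2s, hD2ne⟩ := key B2 h2 h2n
  have hD12 : D1 ≠ D2 := by
    intro hEq
    obtain ⟨x, hx⟩ := classes_nonempty hD1r
    exact (Set.disjoint_left.mp hdisj (hD1s hx)) (hD2s (hEq ▸ hx))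
  have hnotim : ∀ D B', D ∈ r.classes → B' ∈ s.classes → D ⊆ B' → D ≠ subRep r B' →
      D ∉ subRep r '' s.classes := by
    rintro D B' hDr' hB' hDsub hDne' ⟨B'', hB'', rfl⟩
    obtain ⟨x, hx⟩ := subRep_nonempty r B''
    have hxB'' : x ∈ B'' := subRep_subset hle hB'' hx
    have : B'' = B' := Setoid.eq_of_mem_classes hB'' hxB'' hB' (hDsub hx)
    exact hDne' (by rw [this])
  have hT : (insert D1 (insert D2 (subRep r '' s.classes))) ⊆ r.classes := by
    intro D hD
    rcases hD with rfl | rfl | ⟨B', _, rfl⟩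
    · exact hD1r
    · exact hD2r
    · exact subRep_mem_classes r _
  have hD2notim : D2 ∉ subRep r '' s.classes := hnotim D2 B2 hD2r h2 hD2s hD2ne
  have hD1notin : D1 ∉ insert D2 (subRep r '' s.classes) := by
    rintro (rfl | hD1im)
    · exact hD12 rfl
    · exact hnotim D1 B1 hD1r h1 hD1s hD1ne hD1im
  have himfin : (subRep r '' s.classes).Finite := Set.toFinite _
  have hc1 : (insert D1 (insert D2 (subRep r '' s.classes))).ncard
      = (subRep r '' s.classes).ncard + 2 := by
    rw [Set.ncard_insert_of_notMem hD1notin (himfin.insert D2),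
      Set.ncard_insert_of_notMem hD2notim himfin]
  have him : (subRep r '' s.classes).ncard = s.classes.ncard :=
    Set.ncard_image_of_injOn (subRep_injOn hle)
  have hle' : s.classes.ncard + 2 ≤ r.classes.ncard := by
    rw [← him, ← hc1]
    exact Set.ncard_le_ncard hT (classes_finite r)
  omega

theorem ncard_classes_bot [Fintype α] :
    (⊥ : Setoid α).classes.ncard = Fintype.card α := by
  have hsing : ∀ y : α, {x | (⊥ : Setoid α) x y} = {y} := by
    intro y; ext x
    simp only [Set.mem_setOf_eq, Set.mem_singleton_iff]
    exact Iff.rfl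
  have h : (⊥ : Setoid α).classes = Set.range (fun y : α => ({y} : Set α)) := by
    ext B
    constructor
    · rintro ⟨y, rfl⟩; exact ⟨y, (hsing y).symm⟩
    · rintro ⟨y, rfl⟩; exact ⟨y, (hsing y).symm⟩
  rw [h, ← Set.image_univ, Set.ncard_image_of_injective _ Set.singleton_injective,
    Set.ncard_univ, Nat.card_eq_fintype_card]

theorem ncard_classes_top [Nonempty α] :
    (⊤ : Setoid α).classes.ncard = 1 := by
  have h : (⊤ : Setoid α).classes = {Set.univ} := by
    ext B
    constructor
    · rintro ⟨y, rfl⟩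
      simp only [Set.mem_singleton_iff]
      exact Set.eq_univ_of_forall fun x => trivial
    · rintro rfl
      exact ⟨Classical.arbitrary α, (Set.eq_univ_of_forall fun x => trivial).symm⟩
  rw [h, Set.ncard_singleton]

end Aux

/-- For every maximal chain `⊥ = c_0 ⋖ c_1 ⋖ ⋯ ⋖ c_{n-1} = ⊤` of the partition lattice
`Π_n`, the collection of all non-singleton blocks occurring in the partitions of the chain
is a laminar family with exactly `n - 1` distinct members, containing the full set `[n]`. -/
theorem chainBlocks_laminar_card (n : ℕ) (hn : 2 ≤ n) (c : ℕ → Setoid (Fin n))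
    (h0 : c 0 = ⊥) (htop : c (n - 1) = ⊤)
    (hcov : ∀ i, i < n - 1 → c i ⋖ c (i + 1)) :
    (∀ B ∈ chainBlocks n c, ∀ B' ∈ chainBlocks n c, B ⊆ B' ∨ B' ⊆ B ∨ Disjoint B B') ∧
    (chainBlocks n c).ncard = n - 1 ∧ Set.univ ∈ chainBlocks n c := by
  haveI : Nonempty (Fin n) := ⟨⟨0, by omega⟩⟩
  haveI : Nontrivial (Fin n) :=
    ⟨⟨⟨0, by omega⟩, ⟨1, by omega⟩, fun h => by simpa using congrArg Fin.val h⟩⟩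
  -- monotonicity of the chain
  have hmono : ∀ j, j ≤ n - 1 → ∀ i, i ≤ j → c i ≤ c j := by
    intro j
    induction j with
    | zero => intro _ i hi; rw [Nat.le_zero.mp hi]
    | succ k ih =>
      intro hj i hi
      rcases eq_or_lt_of_le hi with rfl | hlt
      · exact le_rfl
      · exact le_trans (ih (by omega) i (by omega)) (hcov k (by omega)).le
  -- the number of classes of c i is n - i
  have hN : ∀ i, i ≤ n - 1 → (c i).classes.ncard = n - i := by
    have hub : ∀ i, i ≤ n - 1 → (c i).classes.ncard ≤ n - i := by
      intro i
      induction i with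
      | zero => intro _; rw [h0, ncard_classes_bot]; simp
      | succ k ih =>
        intro hk
        have h1 : (c (k + 1)).classes.ncard < (c k).classes.ncard :=
          ncard_classes_lt (hcov k (by omega)).lt
        have h2 := ih (by omega)
        omega
    have hlb : ∀ k i, i + k = n - 1 → n - i ≤ (c i).classes.ncard := by
      intro k
      induction k with
      | zero =>
        intro i hik
        have hieq : i = n - 1 := by omega
        subst hieq
        rw [htop, ncard_classes_top]
        omega
      | succ m ih =>
        intro i hik
        have h1 : (c (i + 1)).classes.ncard < (c i).classes.ncard :=
          ncard_classes_lt (hcov i (by omega)).lt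
        have h2 := ih (i + 1) (by omega)
        omega
    intro i hi
    exact le_antisymm (hub i hi) (hlb (n - 1 - i) i (by omega))
  -- the new block at each step
  have hex : ∀ i, ∃ B : Set (Fin n),
      i < n - 1 → B ∈ (c (i + 1)).classes ∧ B ∉ (c i).classes := by
    intro i
    by_cases h : i < n - 1
    · obtain ⟨B, hB, hBn⟩ := exists_new_class (hcov i h).lt
      exact ⟨B, fun _ => ⟨hB, hBn⟩⟩
    · exact ⟨∅, fun hh => absurd hh h⟩
  choose g hg using hex
  have huniq : ∀ i, i < n - 1 → ∀ B ∈ (c (i + 1)).classes, B ∉ (c i).classes → B = g i := by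
    intro i hi B hB hBn
    have hcard : (c i).classes.ncard ≤ (c (i + 1)).classes.ncard + 1 := by
      rw [hN i (by omega), hN (i + 1) (by omega)]
      omega
    exact new_class_unique (hcov i hi).le hcard hB hBn (hg i hi).1 (hg i hi).2
  -- every nontrivial block of the chain is some g j
  have aux : ∀ i, i ≤ n - 1 → ∀ B, B ∈ (c i).classes → B.Nontrivial →
      ∃ j, j < n - 1 ∧ g j = B := by
    intro i
    induction i with
    | zero =>
      intro _ B hB hBnt
      rw [h0] at hB
      obtain ⟨y, rfl⟩ := hB
      exfalso
      obtain ⟨a, ha, b, hb, hab⟩ := hBnt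
      exact hab ((show a = y from ha).trans (show b = y from hb).symm)
    | succ k ih =>
      intro hk B hB hBnt
      by_cases hmem : B ∈ (c k).classes
      · exact ih (by omega) B hmem hBnt
      · exact ⟨k, by omega, (huniq k (by omega) B hB hmem).symm⟩
  -- chainBlocks as an image
  have hset : chainBlocks n c = g '' Set.Iio (n - 1) := by
    ext B
    constructor
    · rintro ⟨i, hi, hB, hBnt⟩
      obtain ⟨j, hj, hgj⟩ := aux i hi B hB hBnt
      exact ⟨j, hj, hgj⟩
    · rintro ⟨i, hi, rfl⟩
      rw [Set.mem_Iio] at hi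
      exact ⟨i + 1, by omega, (hg i hi).1,
        new_class_nontrivial (hcov i hi).le (hg i hi).1 (hg i hi).2⟩
  have key : ∀ i j, i < j → j < n - 1 → g i ≠ g j := by
    intro i j hij hj hEq
    have hgi : g i ∈ (c (i + 1)).classes := (hg i (by omega)).1
    have hle : c (i + 1) ≤ c j := hmono j (by omega) (i + 1) (by omega)
    obtain ⟨x, hx⟩ := classes_nonempty hgi
    have hD : g i ⊆ {y | (c j) y x} := by
      rw [← class_eq_of_mem hgi hx]
      exact fun y hy => hle hy
    have hxgj : x ∈ g j := hEq ▸ hx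
    have hprop := new_class_proper (hcov j hj).le (hg j hj).1 (hg j hj).2 hxgj
    exact hprop.2 (subset_antisymm hprop.1 (hEq ▸ hD))
  have hinj : Set.InjOn g (Set.Iio (n - 1)) := by
    intro i hi j hj hEq
    rcases lt_trichotomy i j with h | h | h
    · exact absurd hEq (key i j h hj)
    · exact h
    · exact absurd hEq.symm (key j i h hi)
  refine ⟨?_, ?_, ?_⟩
  · -- laminarity
    have lam : ∀ i, i ≤ n - 1 → ∀ j, j ≤ n - 1 → i ≤ j →
        ∀ B ∈ (c i).classes, ∀ B' ∈ (c j).classes,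
        B ⊆ B' ∨ B' ⊆ B ∨ Disjoint B B' := by
      intro i hi j hj hij B hB B' hB'
      have hle := hmono j hj i hij
      obtain ⟨x, hx⟩ := classes_nonempty hB
      have hsub : B ⊆ {y | (c j) y x} := by
        rw [← class_eq_of_mem hB hx]
        exact fun y hy => hle hy
      rcases eq_or_ne ({y | (c j) y x}) B' with hEq | hne
      · exact Or.inl (hEq ▸ hsub)
      · refine Or.inr (Or.inr ?_)
        have hdisj : Disjoint {y | (c j) y x} B' := by
          rw [Set.disjoint_left]
          intro z hz1 hz2
          exact hne (Setoid.eq_of_mem_classes ((c j).mem_classes x) hz1 hB' hz2)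
        exact hdisj.mono_left hsub
    rintro B ⟨i, hi, hB, _⟩ B' ⟨j, hj, hB', _⟩
    rcases le_total i j with h | h
    · exact lam i hi j hj h B hB B' hB'
    · rcases lam j hj i hi h B' hB' B hB with h1 | h1 | h1
      · exact Or.inr (Or.inl h1)
      · exact Or.inl h1
      · exact Or.inr (Or.inr h1.symm)
  · -- cardinality
    rw [hset, Set.ncard_image_of_injOn hinj, ← Finset.coe_Iio, Set.ncard_coe_finset,
      Nat.card_Iio]
  · -- univ
    refine ⟨n - 1, le_rfl, ?_, ?_⟩
    · rw [htop]
      exact ⟨Classical.arbitrary _, (Set.eq_univ_of_forall fun x => trivial).symm⟩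
    · exact Set.nontrivial_univ
end

section
/- Let B be a set of n−1 two-element subsets of [n] = {1,…,n} whose associated graph is a spanning tree of the complete graph K_n. Then B contains no broken circuit with respect to the lexicographic order on pairs — i.e., there is no cycle C of K_n such that C with its lexicographically smallest edge removed is contained in B — if and only if every j ∈ {2,…,n} is the larger element of exactly one member of B; equivalently, B = {{f(j), j} : j = 2,…,n} for some function f with 1 ≤ f(j) < j for all j. -/
/-- The ordered pair `(min, max)` of the two endpoints of an edge of `K_n`. -/
def edgePair {n : ℕ} (z : Sym2 (Fin n)) : Fin n × Fin n :=
  Sym2.lift ⟨fun a b => (min a b, max a b), fun a b => by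
    simp [min_comm, max_comm]⟩ z

/-- Lexicographic (strict) order on pairs. -/
def lexLt {n : ℕ} (p q : Fin n × Fin n) : Prop :=
  p.1 < q.1 ∨ (p.1 = q.1 ∧ p.2 < q.2)

/-!
If two edges `(a, j)`, `(b, j)` of `B` with `a < b < j` share their larger endpoint, then together
they are the broken circuit of the triangle `a b j`. So without broken circuits `Prod.snd` is
injective on `B`, and since the `n - 1` edges never end at `0`, it is a bijection onto the nonzero
vertices. Conversely, let a cycle with lexicographically smallest edge `(a, b)` have its other
edges in `B`. The second cycle edge at `a` ends above `b`, so the largest vertex `M` of the cycle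
is not on `(a, b)`; hence both cycle edges at `M` lie in `B`, and both have larger endpoint `M`.
-/

open SimpleGraph

namespace SimpleGraph.Walk.IsCycle

variable {V : Type*} {G : SimpleGraph V} {u v : V} {c : G.Walk v v}

theorem exists_ne_mem_edges (hc : c.IsCycle) (hu : u ∈ c.support) :
    ∃ x y, x ≠ y ∧ s(u, x) ∈ c.edges ∧ s(u, y) ∈ c.edges := by
  obtain ⟨x, y, hxy, hnbr⟩ := Set.ncard_eq_two.mp (hc.ncard_neighborSet_toSubgraph_eq_two hu)
  have hmem : ∀ z, s(u, z) ∈ c.edges ↔ z = x ∨ z = y := fun z => by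
    rw [← Walk.adj_toSubgraph_iff_mem_edges, ← Subgraph.mem_neighborSet, hnbr]; rfl
  exact ⟨x, y, hxy, (hmem x).mpr (.inl rfl), (hmem y).mpr (.inr rfl)⟩

theorem exists_mem_edges_ne (hc : c.IsCycle) (hu : u ∈ c.support) (x : V) :
    ∃ y ≠ x, s(u, y) ∈ c.edges := by
  obtain ⟨y₁, y₂, hy, h₁, h₂⟩ := hc.exists_ne_mem_edges hu
  by_cases hx : y₁ = x
  · exact ⟨y₂, hx ▸ hy.symm, h₂⟩
  · exact ⟨y₁, hx, h₁⟩

end SimpleGraph.Walk.IsCycle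

section CompleteGraph

variable {n : ℕ}

def ContainsBrokenCircuit (B : Finset (Fin n × Fin n)) : Prop :=
  ∃ (v : Fin n) (w : (⊤ : SimpleGraph (Fin n)).Walk v v), w.IsCycle ∧
    ∃ e ∈ w.edges, (∀ e' ∈ w.edges, e' ≠ e → lexLt (edgePair e) (edgePair e')) ∧
      ∀ e' ∈ w.edges, e' ≠ e → edgePair e' ∈ B

theorem edgePair_mk_of_lt {a b : Fin n} (h : a < b) : edgePair s(a, b) = (a, b) := by
  simp [edgePair, min_eq_left h.le, max_eq_right h.le]

theorem edgePair_mk_of_gt {a b : Fin n} (h : b < a) : edgePair s(a, b) = (b, a) := by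
  simp [edgePair, min_eq_right h.le, max_eq_left h.le]

theorem exists_isCycle_edges_eq_triangle {a b j : Fin n} (hab : a ≠ b) (hbj : b ≠ j)
    (hja : j ≠ a) :
    ∃ w : (⊤ : SimpleGraph (Fin n)).Walk a a, w.IsCycle ∧ w.edges = [s(a, b), s(b, j), s(j, a)] :=
  ⟨.cons hab (.cons hbj (.cons hja .nil)), by
    simp [Walk.cons_isCycle_iff, hab, hbj, hja, hab.symm, hja.symm], rfl⟩

theorem containsBrokenCircuit_of_mem_of_mem {B : Finset (Fin n × Fin n)} {a b j : Fin n}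
    (haB : (a, j) ∈ B) (hbB : (b, j) ∈ B) (hab : a < b) (hbj : b < j) :
    ContainsBrokenCircuit B := by
  have haj := hab.trans hbj
  obtain ⟨w, hw, hedges⟩ := exists_isCycle_edges_eq_triangle hab.ne hbj.ne haj.ne'
  have hother : ∀ e ∈ w.edges, e ≠ s(a, b) → edgePair e = (b, j) ∨ edgePair e = (a, j) := by
    intro e he hne
    simp only [hedges, List.mem_cons, List.not_mem_nil, or_false] at he
    rcases he with rfl | rfl | rfl
    · exact absurd rfl hne
    · exact .inl (edgePair_mk_of_lt hbj)
    · exact .inr (edgePair_mk_of_gt haj)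
  refine ⟨a, w, hw, s(a, b), by simp [hedges], fun e he hne => ?_, fun e he hne => ?_⟩ <;>
  rcases hother e he hne with h | h <;> simp [h, edgePair_mk_of_lt hab, lexLt, hab, hbj, haB, hbB]

theorem injOn_snd_of_not_containsBrokenCircuit {B : Finset (Fin n × Fin n)}
    (hpairs : ∀ e ∈ B, e.1 < e.2) (hB : ¬ ContainsBrokenCircuit B) :
    Set.InjOn Prod.snd (B : Set (Fin n × Fin n)) := by
  rintro ⟨a, j⟩ ha ⟨b, j'⟩ hb (rfl : j = j')
  simp only [Prod.mk.injEq, and_true]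
  by_contra hne
  rcases lt_or_gt_of_ne hne with hab | hba
  · exact hB (containsBrokenCircuit_of_mem_of_mem ha hb hab (hpairs _ hb))
  · exact hB (containsBrokenCircuit_of_mem_of_mem hb ha hba (hpairs _ ha))

theorem existsUnique_snd_eq_of_injOn {B : Finset (Fin n × Fin n)} (hpairs : ∀ e ∈ B, e.1 < e.2)
    (hcard : B.card = n - 1) (hinj : Set.InjOn Prod.snd (B : Set (Fin n × Fin n)))
    (j : Fin n) (hj : j.val ≠ 0) : ∃! e, e ∈ B ∧ e.2 = j := by
  have hn : 0 < n := j.pos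
  have hsnd : ∀ e ∈ B, e.2 ∈ Finset.univ.erase ⟨0, hn⟩ := fun e he => Finset.mem_erase.mpr
    ⟨fun h => by simpa [h] using Fin.lt_def.mp (hpairs e he), Finset.mem_univ _⟩
  obtain ⟨e, he, rfl⟩ := Finset.surj_on_of_inj_on_of_card_le (fun e _ => e.2) hsnd
    (fun _ _ h₁ h₂ h => hinj h₁ h₂ h) (by simp [hcard])
    j (Finset.mem_erase.mpr ⟨fun h => hj (by simp [h]), Finset.mem_univ _⟩)
  exact ⟨e, ⟨he, rfl⟩, fun e' ⟨he', h⟩ => hinj he' he h⟩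

theorem exists_mem_support_gt_of_lexMin {v a b : Fin n} {w : (⊤ : SimpleGraph (Fin n)).Walk v v}
    (hw : w.IsCycle) (hab : a < b) (he : s(a, b) ∈ w.edges)
    (hmin : ∀ e' ∈ w.edges, e' ≠ s(a, b) → lexLt (a, b) (edgePair e')) :
    ∃ c ∈ w.support, b < c := by
  obtain ⟨c, hcb, hc⟩ := hw.exists_mem_edges_ne (w.fst_mem_support_of_mem_edges he) b
  have hlex := hmin _ hc (by simp [hcb, hab.ne])
  refine ⟨c, w.snd_mem_support_of_mem_edges hc, ?_⟩
  rcases lt_or_gt_of_ne (w.adj_of_mem_edges hc).ne with hac | hca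
  · simpa [edgePair_mk_of_lt hac, lexLt] using hlex
  · simp [edgePair_mk_of_gt hca, lexLt, hca.not_gt, hca.ne'] at hlex

theorem not_containsBrokenCircuit_of_existsUnique {B : Finset (Fin n × Fin n)}
    (huniq : ∀ j : Fin n, j.val ≠ 0 → ∃! e, e ∈ B ∧ e.2 = j) : ¬ ContainsBrokenCircuit B := by
  rintro ⟨v, w, hw, e, he, hmin, hB⟩
  obtain ⟨M, hM, hMmax⟩ := w.support.toFinset.exists_max_image id ⟨v, by simp⟩
  simp only [List.mem_toFinset, id] at hM hMmax
  have hlt : ∀ x, s(M, x) ∈ w.edges → x < M := fun x hx =>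
    (hMmax x (w.snd_mem_support_of_mem_edges hx)).lt_of_ne (w.adj_of_mem_edges hx).ne'
  have hmemB : ∀ x, s(M, x) ∈ w.edges → (x, M) ∈ B := by
    intro x hx
    have hxM := hlt x hx
    rw [Sym2.eq_swap] at hx
    have hne : s(x, M) ≠ e := by
      rintro rfl
      obtain ⟨c, hc, hMc⟩ := exists_mem_support_gt_of_lexMin hw hxM he
        (edgePair_mk_of_lt hxM ▸ hmin)
      exact (hMmax c hc).not_gt hMc
    simpa [edgePair_mk_of_lt hxM] using hB _ hx hne
  obtain ⟨x, y, hxy, hx, hy⟩ := hw.exists_ne_mem_edges hM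
  obtain ⟨e₀, -, hunique⟩ := huniq M (by have := Fin.lt_def.mp (hlt x hx); omega)
  have hx₀ : (x, M) = e₀ := hunique _ ⟨hmemB x hx, rfl⟩
  have hy₀ : (y, M) = e₀ := hunique _ ⟨hmemB y hy, rfl⟩
  exact hxy (congrArg Prod.fst (hx₀.trans hy₀.symm))

end CompleteGraph

theorem nbc_iff_larger_element_unique_general (n : ℕ) (B : Finset (Fin n × Fin n))
    (hpairs : ∀ e ∈ B, e.1 < e.2) (hcard : B.card = n - 1) :
    (¬ ∃ (v : Fin n) (w : (⊤ : SimpleGraph (Fin n)).Walk v v), w.IsCycle ∧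
        ∃ e ∈ w.edges, (∀ e' ∈ w.edges, e' ≠ e → lexLt (edgePair e) (edgePair e')) ∧
          ∀ e' ∈ w.edges, e' ≠ e → edgePair e' ∈ B) ↔
    (∀ j : Fin n, j.val ≠ 0 → ∃! e, e ∈ B ∧ e.2 = j) :=
  ⟨fun hB => existsUnique_snd_eq_of_injOn hpairs hcard
      (injOn_snd_of_not_containsBrokenCircuit hpairs hB),
    not_containsBrokenCircuit_of_existsUnique⟩

/-- Let `B` be a set of `n - 1` edges `(i, j)`, `i < j`, of the complete graph on `Fin n`
whose associated graph is a spanning tree.  Then `B` contains no broken circuit with respect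
to the lexicographic order on pairs (no cycle of `K_n` with its lexicographically smallest
edge removed is contained in `B`) if and only if every vertex `j ≠ 0` is the larger element
of exactly one member of `B`. -/
theorem nbc_iff_larger_element_unique (n : ℕ) (B : Finset (Fin n × Fin n))
    (hpairs : ∀ e ∈ B, e.1 < e.2) (hcard : B.card = n - 1)
    (hconn : (SimpleGraph.fromEdgeSet {z : Sym2 (Fin n) | ∃ e ∈ B, z = s(e.1, e.2)}).Connected)
    (hacyc : (SimpleGraph.fromEdgeSet {z : Sym2 (Fin n) | ∃ e ∈ B, z = s(e.1, e.2)}).IsAcyclic) :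
    (¬ ∃ (v : Fin n) (w : (⊤ : SimpleGraph (Fin n)).Walk v v), w.IsCycle ∧
        ∃ e ∈ w.edges, (∀ e' ∈ w.edges, e' ≠ e → lexLt (edgePair e) (edgePair e')) ∧
          ∀ e' ∈ w.edges, e' ≠ e → edgePair e' ∈ B) ↔
    (∀ j : Fin n, j.val ≠ 0 → ∃! e, e ∈ B ∧ e.2 = j) :=
  nbc_iff_larger_element_unique_general n B hpairs hcard
end

section
/- For n ≥ 2, the map Φ that assigns to a laminar family F the edge set Φ(F) = {{min S, secondmin S} : S ∈ F} (where min S and secondmin S are the smallest and second-smallest elements of S) restricts to a bijection from the set of those maximal laminar families F of subsets of [n] with all members of cardinality ≥ 2 for which Φ(F) is a spanning tree of the complete graph K_n (the 'proper' maximal nested sets), onto the set of all edge sets of the form {{f(j), j} : j = 2,…,n} with 1 ≤ f(j) < j for all j (the no broken circuit bases of Π_n with respect to the lexicographic atom order). -/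
/-- A family of subsets of `[n]` is laminar if any two members are disjoint or comparable. -/
def Laminar {n : ℕ} (F : Finset (Finset (Fin n))) : Prop :=
  ∀ S ∈ F, ∀ T ∈ F, S ⊆ T ∨ T ⊆ S ∨ Disjoint S T

/-- A laminar family on `[n]` all of whose members have cardinality at least `2`. -/
def GoodLaminar (n : ℕ) (F : Finset (Finset (Fin n))) : Prop :=
  Laminar F ∧ ∀ S ∈ F, 2 ≤ S.card

/-- A maximal laminar family of subsets of `[n]` with all members of cardinality `≥ 2`. -/
def MaxGoodLaminar (n : ℕ) (F : Finset (Finset (Fin n))) : Prop :=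
  GoodLaminar n F ∧ ∀ G : Finset (Finset (Fin n)), GoodLaminar n G → F ⊆ G → G = F

/-- `{min S, secondmin S}`: the set of the two smallest elements of `S`. -/
def minTwo {n : ℕ} (S : Finset (Fin n)) : Finset (Fin n) :=
  ((S.sort (· ≤ ·)).take 2).toFinset

/-- The simple graph on `Fin n` associated with a set `E` of (two-element) subsets. -/
def graphOf {n : ℕ} (E : Finset (Finset (Fin n))) : SimpleGraph (Fin n) where
  Adj x y := x ≠ y ∧ ∃ e ∈ E, x ∈ e ∧ y ∈ e
  symm := ⟨fun _ _ h => ⟨h.1.symm, h.2.imp fun _ he => ⟨he.1, he.2.2, he.2.1⟩⟩⟩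
  loopless := ⟨fun _ h => h.1 rfl⟩

/-- `E` is a spanning tree of the complete graph `K_n` on vertex set `Fin n`:  a set of
`n - 1` two-element subsets forming a connected acyclic graph on all `n` vertices. -/
def IsSpanningTree (n : ℕ) (E : Finset (Finset (Fin n))) : Prop :=
  (∀ e ∈ E, e.card = 2) ∧ E.card = n - 1 ∧ (graphOf E).Connected ∧ (graphOf E).IsAcyclic

/-!
A function `f` with `f j < j` for `j ≠ 0` is a rooted tree on `Fin n`, and its edges `{f j, j}`
form a spanning tree. Conversely, in a laminar family the second smallest element of a member
determines the smallest one, so if `Φ(F)` has `n - 1` edges, every `j ≠ 0` is the second smallest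
element of a member and `Φ(F)` is the edge set of such an `f`. The member with second smallest
element `j` is then forced by `f`: a point `x > j` lies in it iff `f x` does. The forced members
form a laminar family with `n - 1` members, which is maximal since a laminar family of sets of size
`≥ 2` on `n` points has at most `n - 1` members; so `F` is this family, determined by `Φ(F)`.
-/

open Finset

section Laminar

variable {n : ℕ} {F : Finset (Finset (Fin n))}

lemma Laminar.mono {G : Finset (Finset (Fin n))} (hF : Laminar F) (hGF : G ⊆ F) : Laminar G :=
  fun S hS T hT => hF S (hGF hS) T (hGF hT)

lemma Laminar.image_erase (hF : Laminar F) (a : Fin n) : Laminar (F.image (·.erase a)) := by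
  simp only [Laminar, mem_image, forall_exists_index, and_imp, forall_apply_eq_imp_iff₂]
  intro S hS T hT
  rcases hF S hS T hT with h | h | h
  · exact Or.inl (erase_subset_erase a h)
  · exact Or.inr (Or.inl (erase_subset_erase a h))
  · exact Or.inr (Or.inr (h.mono (erase_subset a S) (erase_subset a T)))

lemma Laminar.ssubset_or_disjoint_of_minimal (hF : Laminar F) {S T : Finset (Fin n)}
    (hS : Minimal (· ∈ F) S) (hT : T ∈ F) (hTS : T ≠ S) : S ⊂ T ∨ Disjoint S T := by
  rcases hF S hS.prop T hT with h | h | h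
  · exact Or.inl (ssubset_of_subset_of_ne h hTS.symm)
  · exact absurd (hS.eq_of_le hT h) hTS
  · exact Or.inr h

lemma Laminar.injOn_erase_of_minimal (hF : Laminar F) (h2 : ∀ S ∈ F, 2 ≤ #S)
    {S : Finset (Fin n)} (hS : Minimal (· ∈ F) S) {a : Fin n} (ha : a ∈ S) :
    Set.InjOn (·.erase a) (F.erase S : Set (Finset (Fin n))) := by
  have hne : ∀ T ∈ F.erase S, ∀ T' ∈ F.erase S, a ∈ T → a ∉ T' → T.erase a ≠ T' := by
    intro T hT T' hT' haT haT' hTT'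
    obtain ⟨hTS, hT⟩ := mem_erase.1 hT
    obtain ⟨hT'S, hT'⟩ := mem_erase.1 hT'
    have hST : S ⊆ T := ((hF.ssubset_or_disjoint_of_minimal hS hT hTS).resolve_right
      (not_disjoint_iff.2 ⟨a, ha, haT⟩)).subset
    have hST' : Disjoint S T' :=
      (hF.ssubset_or_disjoint_of_minimal hS hT' hT'S).resolve_left fun h => haT' (h.subset ha)
    obtain ⟨x, hx⟩ : (S.erase a).Nonempty := by
      rw [← card_pos, card_erase_of_mem ha]; have := h2 S hS.prop; omega
    exact disjoint_left.1 hST' (mem_of_mem_erase hx) (hTT' ▸ erase_subset_erase a hST hx)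
  intro T hT T' hT' hTT'
  by_cases haT : a ∈ T <;> by_cases haT' : a ∈ T'
  · exact erase_injOn' a haT haT' hTT'
  · exact absurd (hTT'.trans (erase_eq_of_notMem haT')) (hne T hT T' hT' haT haT')
  · exact absurd (hTT'.symm.trans (erase_eq_of_notMem haT)) (hne T' hT' T hT haT' haT)
  · simpa only [erase_eq_of_notMem haT, erase_eq_of_notMem haT'] using hTT'

lemma Laminar.two_le_card_erase_of_minimal (hF : Laminar F) (h2 : ∀ S ∈ F, 2 ≤ #S)
    {S : Finset (Fin n)} (hS : Minimal (· ∈ F) S) {a : Fin n} (ha : a ∈ S) :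
    ∀ T ∈ F.erase S, 2 ≤ #(T.erase a) := by
  intro T hT
  obtain ⟨hTS, hT⟩ := mem_erase.1 hT
  by_cases haT : a ∈ T
  · have hST := (hF.ssubset_or_disjoint_of_minimal hS hT hTS).resolve_right
      (not_disjoint_iff.2 ⟨a, ha, haT⟩)
    rw [card_erase_of_mem haT]
    have := card_lt_card hST
    have := h2 S hS.prop
    omega
  · rw [erase_eq_of_notMem haT]
    exact h2 T hT

/-- Contracting a minimal member `S ∋ a` by deleting `a` everywhere loses exactly the member `S`
and one point of the ground set. -/
theorem Laminar.card_le_card_sub_one (hF : Laminar F) (h2 : ∀ S ∈ F, 2 ≤ #S)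
    {X : Finset (Fin n)} (hX : ∀ S ∈ F, S ⊆ X) : #F ≤ #X - 1 := by
  induction hk : #F generalizing F X with
  | zero => exact Nat.zero_le _
  | succ k ih =>
    obtain ⟨S, hS⟩ := exists_minimal_of_wellFoundedLT (· ∈ F) (card_pos.1 (by omega))
    obtain ⟨a, ha⟩ : S.Nonempty := card_pos.1 (by have := h2 S hS.prop; omega)
    have hinj := hF.injOn_erase_of_minimal h2 hS ha
    have hcard := ih (F := (F.erase S).image (·.erase a)) (X := X.erase a)
      ((hF.mono (erase_subset S F)).image_erase a)
      (by
        simp only [mem_image, forall_exists_index, and_imp, forall_apply_eq_imp_iff₂]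
        exact hF.two_le_card_erase_of_minimal h2 hS ha)
      (by
        simp only [mem_image, forall_exists_index, and_imp, forall_apply_eq_imp_iff₂]
        exact fun T hT => erase_subset_erase a (hX T (mem_of_mem_erase hT)))
      (by rw [card_image_of_injOn hinj, card_erase_of_mem hS.prop]; omega)
    have hSX : 2 ≤ #X := (h2 S hS.prop).trans (card_le_card (hX S hS.prop))
    rw [card_erase_of_mem (hX S hS.prop ha)] at hcard
    omega

theorem GoodLaminar.card_le (hF : GoodLaminar n F) : #F ≤ n - 1 := by
  simpa using hF.1.card_le_card_sub_one hF.2 (X := univ) fun S _ => subset_univ S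

end Laminar

section MinTwo

variable {α : Type*} [LinearOrder α]

structure IsMinTwo (S : Finset α) (a b : α) : Prop where
  min_mem : a ∈ S
  secondMin_mem : b ∈ S
  lt : a < b
  eq_or_le : ∀ x ∈ S, x = a ∨ b ≤ x

lemma isMinTwo_pair {a b : α} (hab : a < b) : IsMinTwo {a, b} a b := by
  refine ⟨mem_insert_self a {b}, mem_insert_of_mem (mem_singleton_self b), hab, ?_⟩
  simp only [mem_insert, mem_singleton]
  rintro x (rfl | rfl)
  exacts [Or.inl rfl, Or.inr le_rfl]

lemma exists_isMinTwo {S : Finset α} (hS : 2 ≤ #S) : ∃ a b, IsMinTwo S a b := by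
  have hne : S.Nonempty := card_pos.1 (by omega)
  have hne' : (S.erase (S.min' hne)).Nonempty :=
    card_pos.1 (by rw [card_erase_of_mem (S.min'_mem hne)]; omega)
  obtain ⟨hba, hb⟩ := mem_erase.1 ((S.erase (S.min' hne)).min'_mem hne')
  refine ⟨_, _, S.min'_mem hne, hb, lt_of_le_of_ne (S.min'_le _ hb) (Ne.symm hba),
    fun x hx => or_iff_not_imp_left.2 fun hxa => ?_⟩
  exact (S.erase (S.min' hne)).min'_le x (mem_erase.2 ⟨hxa, hx⟩)

lemma IsMinTwo.two_le_card {S : Finset α} {a b : α} (h : IsMinTwo S a b) : 2 ≤ #S :=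
  calc 2 = #{a, b} := (card_pair h.lt.ne).symm
    _ ≤ #S := card_le_card (insert_subset h.min_mem (singleton_subset_iff.2 h.secondMin_mem))

lemma IsMinTwo.unique {S : Finset α} {a b c d : α} (h : IsMinTwo S a b) (h' : IsMinTwo S c d) :
    a = c ∧ b = d := by
  obtain ⟨ha, hb, hab, hS⟩ := h
  obtain ⟨hc, hd, hcd, hS'⟩ := h'
  have hac : a = c := by
    rcases hS c hc with h | h
    · exact h.symm
    rcases hS' a ha with h' | h'
    · exact h'
    exact absurd (((h'.trans_lt hab).trans_le h).trans hcd) (lt_irrefl d)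
  subst hac
  refine ⟨rfl, ?_⟩
  rcases hS d hd with h | h
  · exact absurd h hcd.ne'
  rcases hS' b hb with h' | h'
  · exact absurd h' hab.ne'
  exact le_antisymm h h'

lemma pair_eq_pair_of_lt {a b c d : α} (hab : a < b) (hcd : c < d)
    (h : ({a, b} : Finset α) = {c, d}) : a = c ∧ b = d :=
  (isMinTwo_pair hab).unique (h ▸ isMinTwo_pair hcd)

lemma IsMinTwo.not_subset {S T : Finset α} {a b c d : α} (hS : IsMinTwo S a b)
    (hT : IsMinTwo T c d) (hbd : b < d) : ¬ S ⊆ T := by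
  intro hST
  rcases hT.eq_or_le b (hST hS.secondMin_mem) with rfl | h
  · rcases hT.eq_or_le a (hST hS.min_mem) with rfl | h
    · exact lt_irrefl a hS.lt
    · exact lt_irrefl d (h.trans_lt (hS.lt.trans hbd))
  · exact lt_irrefl d (h.trans_lt hbd)

end MinTwo

section MinTwoFin

variable {n : ℕ} {S T : Finset (Fin n)} {a b c d : Fin n}

lemma IsMinTwo.minTwo_eq (h : IsMinTwo S a b) : minTwo S = {a, b} := by
  obtain ⟨ha, hb, hab, hS⟩ := h
  have hb' : b ∈ S.erase a := mem_erase.2 ⟨hab.ne', hb⟩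
  have hrest : ∀ x ∈ (S.erase a).erase b, b < x := fun x hx => by
    simp only [mem_erase] at hx
    obtain ⟨hxb, hxa, hx⟩ := hx
    exact lt_of_le_of_ne ((hS x hx).resolve_left hxa) (Ne.symm hxb)
  have hS' : S = insert a (insert b ((S.erase a).erase b)) := by
    rw [insert_erase hb', insert_erase ha]
  rw [minTwo, hS', sort_insert, sort_insert]
  · simp
  · exact fun x hx => (hrest x hx).le
  · exact fun h => lt_irrefl b (hrest b h)
  · rintro x hx
    rcases mem_insert.1 hx with rfl | hx
    exacts [hab.le, (hab.trans (hrest x hx)).le]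
  · rintro hx
    rcases mem_insert.1 hx with h | hx
    exacts [hab.ne h, lt_irrefl a (hab.trans (hrest a hx))]

lemma isMinTwo_of_minTwo_eq (hS : 2 ≤ #S) (hab : a < b) (h : minTwo S = {a, b}) :
    IsMinTwo S a b := by
  obtain ⟨c, d, hcd⟩ := exists_isMinTwo hS
  obtain ⟨rfl, rfl⟩ := pair_eq_pair_of_lt hcd.lt hab (hcd.minTwo_eq ▸ h)
  exact hcd

lemma Laminar.eq_of_isMinTwo {F : Finset (Finset (Fin n))} (hF : Laminar F) (hS : S ∈ F)
    (hT : T ∈ F) (hSab : IsMinTwo S a b) (hTcb : IsMinTwo T c b) : a = c := by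
  rcases hF S hS T hT with h | h | h
  · exact ((hTcb.eq_or_le a (h hSab.min_mem)).resolve_right (not_le.2 hSab.lt))
  · exact ((hSab.eq_or_le c (h hTcb.min_mem)).resolve_right (not_le.2 hTcb.lt)).symm
  · exact absurd hTcb.secondMin_mem (disjoint_left.1 h hSab.secondMin_mem)

lemma Laminar.subset_of_isMinTwo {F : Finset (Finset (Fin n))} (hF : Laminar F) (hS : S ∈ F)
    (hT : T ∈ F) (hSab : IsMinTwo S a b) (hTcd : IsMinTwo T c d) (hbd : b < d)
    (hST : ¬ Disjoint T S) : T ⊆ S := by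
  rcases hF T hT S hS with h | h | h
  exacts [h, absurd h (hSab.not_subset hTcd hbd), absurd h hST]

end MinTwoFin

lemma Fin.val_ne_zero_of_lt {n : ℕ} {a b : Fin n} (h : a < b) : b.val ≠ 0 :=
  ((Nat.zero_le a.val).trans_lt h).ne'

lemma Fin.val_ne_zero_of_le {n : ℕ} {a b : Fin n} (ha : a.val ≠ 0) (h : a ≤ b) : b.val ≠ 0 := by
  rw [Fin.le_def] at h
  omega

lemma card_filter_val_ne_zero (n : ℕ) : #(univ.filter fun j : Fin n => j.val ≠ 0) = n - 1 := by
  cases n with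
  | zero => rfl
  | succ n =>
    simp only [ne_eq, Fin.val_eq_zero_iff, filter_ne', mem_univ, card_erase_of_mem, card_univ,
      Fintype.card_fin, add_tsub_cancel_right]

section ParentEdges

variable {n : ℕ}

/-- `f` is the parent map of a tree on `Fin n` rooted at `0`. -/
def IsParentMap (f : Fin n → Fin n) : Prop :=
  ∀ j : Fin n, j.val ≠ 0 → f j < j

def parentEdges (f : Fin n → Fin n) : Finset (Finset (Fin n)) :=
  (univ.filter fun j : Fin n => j.val ≠ 0).image fun j => {f j, j}

lemma mem_parentEdges {f : Fin n → Fin n} {e : Finset (Fin n)} :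
    e ∈ parentEdges f ↔ ∃ j : Fin n, j.val ≠ 0 ∧ {f j, j} = e := by
  simp [parentEdges]

lemma card_parentEdges {f : Fin n → Fin n} (hf : IsParentMap f) :
    #(parentEdges f) = n - 1 := by
  rw [parentEdges, card_image_of_injOn, card_filter_val_ne_zero]
  intro i hi j hj hij
  simp only [coe_filter, mem_univ, true_and, Set.mem_ofPred_eq] at hi hj
  exact (pair_eq_pair_of_lt (hf i hi) (hf j hj) hij).2

/-- In a laminar family the second smallest element of a member determines its smallest one, so
`Φ(F)` has at most as many edges as there are second smallest elements. -/
lemma Laminar.exists_isMinTwo_of_card_le {F : Finset (Finset (Fin n))} (hF : Laminar F)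
    (h2 : ∀ S ∈ F, 2 ≤ #S) (hcard : n - 1 ≤ #(F.image minTwo)) {j : Fin n} (hj : j.val ≠ 0) :
    ∃ S ∈ F, ∃ a, IsMinTwo S a j := by
  classical
  set H := univ.filter fun i : Fin n => ∃ S ∈ F, ∃ a, IsMinTwo S a i
  have hHsub : H ⊆ univ.filter fun i : Fin n => i.val ≠ 0 := by
    intro i hi
    obtain ⟨S, -, a, hS⟩ := (mem_filter.1 hi).2
    exact mem_filter.2 ⟨mem_univ i, Fin.val_ne_zero_of_lt hS.lt⟩
  have hcardH : #(F.image minTwo) ≤ #H := by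
    refine card_le_card_of_forall_subsingleton
      (fun e i => ∃ S ∈ F, ∃ a, IsMinTwo S a i ∧ minTwo S = e) ?_ ?_
    · simp only [mem_image, forall_exists_index, and_imp, forall_apply_eq_imp_iff₂]
      intro S hS
      obtain ⟨a, b, hab⟩ := exists_isMinTwo (h2 S hS)
      exact ⟨b, mem_filter.2 ⟨mem_univ b, S, hS, a, hab⟩, S, hS, a, hab, rfl⟩
    · rintro i - e₁ ⟨-, S, hS, a, hSa, rfl⟩ e₂ ⟨-, T, hT, c, hTc, rfl⟩
      rw [hSa.minTwo_eq, hTc.minTwo_eq, hF.eq_of_isMinTwo hS hT hSa hTc]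
  have hH : H = univ.filter fun i : Fin n => i.val ≠ 0 :=
    eq_of_subset_of_card_le hHsub (by rw [card_filter_val_ne_zero]; omega)
  have hjH : j ∈ H := hH ▸ mem_filter.2 ⟨mem_univ j, hj⟩
  exact (mem_filter.1 hjH).2

theorem Laminar.exists_image_minTwo_eq_parentEdges {F : Finset (Finset (Fin n))}
    (hF : Laminar F) (h2 : ∀ S ∈ F, 2 ≤ #S) (hcard : n - 1 ≤ #(F.image minTwo)) :
    ∃ f : Fin n → Fin n, IsParentMap f ∧ F.image minTwo = parentEdges f := by
  have hpartner : ∀ j : Fin n, ∃ a, j.val ≠ 0 → ∃ S ∈ F, IsMinTwo S a j := by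
    intro j
    by_cases hj : j.val = 0
    · exact ⟨j, fun h => absurd hj h⟩
    · obtain ⟨S, hS, a, hSa⟩ := hF.exists_isMinTwo_of_card_le h2 hcard hj
      exact ⟨a, fun _ => ⟨S, hS, hSa⟩⟩
  choose f hf using hpartner
  refine ⟨f, fun j hj => (hf j hj).choose_spec.2.lt, ?_⟩
  ext e
  rw [mem_parentEdges, mem_image]
  constructor
  · rintro ⟨S, hS, rfl⟩
    obtain ⟨a, b, hab⟩ := exists_isMinTwo (h2 S hS)
    have hb := Fin.val_ne_zero_of_lt hab.lt
    obtain ⟨T, hT, hTb⟩ := hf b hb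
    exact ⟨b, hb, by rw [hab.minTwo_eq, hF.eq_of_isMinTwo hS hT hab hTb]⟩
  · rintro ⟨j, hj, rfl⟩
    obtain ⟨S, hS, hSj⟩ := hf j hj
    exact ⟨S, hS, hSj.minTwo_eq⟩

end ParentEdges

section Blocks

variable {n : ℕ} {f : Fin n → Fin n}

def ancestorBelow (f : Fin n → Fin n) (j x : Fin n) : Fin n :=
  if _ : j ≤ x ∧ f x < x then ancestorBelow f j (f x) else x
termination_by x.val
decreasing_by simp_all

lemma ancestorBelow_of_lt {j x : Fin n} (h : x < j) : ancestorBelow f j x = x := by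
  rw [ancestorBelow, dif_neg fun h' => h'.1.not_gt h]

lemma ancestorBelow_of_le {j x : Fin n} (h : j ≤ x) (hx : f x < x) :
    ancestorBelow f j x = ancestorBelow f j (f x) := by
  rw [ancestorBelow, dif_pos ⟨h, hx⟩]

lemma ancestorBelow_ancestorBelow (hf : IsParentMap f) {i j : Fin n}
    (hi : i.val ≠ 0) (hji : j ≤ i) (x : Fin n) :
    ancestorBelow f j (ancestorBelow f i x) = ancestorBelow f j x := by
  by_cases hx : x < i
  · rw [ancestorBelow_of_lt hx]
  · have hix := not_lt.1 hx
    have hfx := hf x (Fin.val_ne_zero_of_le hi hix)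
    rw [ancestorBelow_of_le hix hfx, ancestorBelow_of_le (hji.trans hix) hfx]
    exact ancestorBelow_ancestorBelow hf hi hji (f x)
termination_by x.val
decreasing_by exact hfx

/-- The member with second smallest element `j` of the proper maximal laminar family of `f`. -/
def block (f : Fin n → Fin n) (j : Fin n) : Finset (Fin n) :=
  univ.filter fun x => ancestorBelow f j x = f j ∧ (j ≤ x ∨ x = f j)

lemma mem_block {j x : Fin n} :
    x ∈ block f j ↔ ancestorBelow f j x = f j ∧ (j ≤ x ∨ x = f j) := by
  simp [block]

lemma isMinTwo_block (hf : IsParentMap f) {j : Fin n} (hj : j.val ≠ 0) :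
    IsMinTwo (block f j) (f j) j := by
  refine ⟨mem_block.2 ⟨ancestorBelow_of_lt (hf j hj), Or.inr rfl⟩, mem_block.2 ⟨?_, Or.inl le_rfl⟩,
    hf j hj, fun x hx => (mem_block.1 hx).2.symm.imp_right id⟩
  rw [ancestorBelow_of_le le_rfl (hf j hj), ancestorBelow_of_lt (hf j hj)]

lemma mem_block_iff (hf : IsParentMap f) {j : Fin n} (hj : j.val ≠ 0) {x : Fin n} :
    x ∈ block f j ↔ x = f j ∨ x = j ∨ (j < x ∧ f x ∈ block f j) := by
  constructor
  · intro hx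
    rcases (isMinTwo_block hf hj).eq_or_le x hx with rfl | hjx
    · exact Or.inl rfl
    rcases hjx.eq_or_lt with rfl | hjx
    · exact Or.inr (Or.inl rfl)
    have hfx := hf x (Fin.val_ne_zero_of_lt hjx)
    have hanc : ancestorBelow f j (f x) = f j := by
      rw [← ancestorBelow_of_le hjx.le hfx]; exact (mem_block.1 hx).1
    refine Or.inr (Or.inr ⟨hjx, mem_block.2 ⟨hanc, ?_⟩⟩)
    rcases lt_or_ge (f x) j with h | h
    · exact Or.inr (ancestorBelow_of_lt h ▸ hanc)
    · exact Or.inl h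
  · rintro (rfl | rfl | ⟨hjx, hfx⟩)
    · exact (isMinTwo_block hf hj).min_mem
    · exact (isMinTwo_block hf hj).secondMin_mem
    · refine mem_block.2 ⟨?_, Or.inl hjx.le⟩
      rw [ancestorBelow_of_le hjx.le (hf x (Fin.val_ne_zero_of_lt hjx))]
      exact (mem_block.1 hfx).1

lemma eq_block_of_forall_mem_iff (hf : IsParentMap f) {j : Fin n} (hj : j.val ≠ 0)
    {S : Finset (Fin n)} (hS : ∀ x, x ∈ S ↔ x = f j ∨ x = j ∨ (j < x ∧ f x ∈ S)) :
    S = block f j := by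
  ext x
  induction x using WellFoundedLT.induction with
  | _ x ih =>
    rw [hS, mem_block_iff hf hj]
    exact or_congr_right (or_congr_right
      (and_congr_right fun hjx => ih _ (hf x (Fin.val_ne_zero_of_lt hjx))))

lemma block_subset_block (hf : IsParentMap f) {i j : Fin n} (hji : j < i)
    (h : ¬ Disjoint (block f i) (block f j)) : block f i ⊆ block f j := by
  have hi := Fin.val_ne_zero_of_lt hji
  obtain ⟨k, hki, hkj⟩ := not_disjoint_iff.1 h
  have hfi : ancestorBelow f j (f i) = f j := by
    rw [← (mem_block.1 hkj).1, ← ancestorBelow_ancestorBelow hf hi hji.le k, (mem_block.1 hki).1]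
  intro x hx
  obtain ⟨hxi, hix⟩ := mem_block.1 hx
  refine mem_block.2 ⟨by rw [← ancestorBelow_ancestorBelow hf hi hji.le x, hxi, hfi], ?_⟩
  rcases hix with hix | rfl
  · exact Or.inl (hji.le.trans hix)
  · rcases lt_or_ge (f i) j with h | h
    · exact Or.inr (ancestorBelow_of_lt h ▸ hfi)
    · exact Or.inl h

end Blocks

section BlockFamily

variable {n : ℕ} {f : Fin n → Fin n}

def blockFamily (f : Fin n → Fin n) : Finset (Finset (Fin n)) :=
  (univ.filter fun j : Fin n => j.val ≠ 0).image (block f)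

lemma image_minTwo_blockFamily (hf : IsParentMap f) :
    (blockFamily f).image minTwo = parentEdges f := by
  rw [blockFamily, image_image, parentEdges]
  refine image_congr fun j hj => (isMinTwo_block hf ?_).minTwo_eq
  simpa using hj

lemma goodLaminar_blockFamily (hf : IsParentMap f) :
    GoodLaminar n (blockFamily f) := by
  simp only [GoodLaminar, Laminar, blockFamily, mem_image, mem_filter, mem_univ, true_and,
    forall_exists_index, and_imp, forall_apply_eq_imp_iff₂]
  refine ⟨fun i hi j hj => ?_, fun j hj => ?_⟩
  · by_cases hd : Disjoint (block f i) (block f j)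
    · exact Or.inr (Or.inr hd)
    rcases lt_trichotomy i j with hij | rfl | hji
    · exact Or.inr (Or.inl (block_subset_block hf hij (fun h => hd h.symm)))
    · exact Or.inl subset_rfl
    · exact Or.inl (block_subset_block hf hji hd)
  · exact (isMinTwo_block hf hj).two_le_card

lemma maxGoodLaminar_blockFamily (hf : IsParentMap f) :
    MaxGoodLaminar n (blockFamily f) := by
  refine ⟨goodLaminar_blockFamily hf, fun G hG hfG => (eq_of_subset_of_card_le hfG ?_).symm⟩
  calc #G ≤ n - 1 := hG.card_le
    _ = #((blockFamily f).image minTwo) := by rw [image_minTwo_blockFamily hf, card_parentEdges hf]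
    _ ≤ #(blockFamily f) := card_image_le

lemma Laminar.mem_iff_of_isMinTwo {F : Finset (Finset (Fin n))} (hF : Laminar F)
    {S : Finset (Fin n)} (hS : S ∈ F) {j : Fin n} (hSj : IsMinTwo S (f j) j)
    (hmem : ∀ x, j < x → ∃ T ∈ F, IsMinTwo T (f x) x) (x : Fin n) :
    x ∈ S ↔ x = f j ∨ x = j ∨ (j < x ∧ f x ∈ S) := by
  have hinside : ∀ x, j < x → ∃ T, IsMinTwo T (f x) x ∧ (¬ Disjoint T S → T ⊆ S) := by
    intro x hjx
    obtain ⟨T, hT, hTx⟩ := hmem x hjx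
    exact ⟨T, hTx, hF.subset_of_isMinTwo hS hT hSj hTx hjx⟩
  constructor
  · intro hx
    rcases hSj.eq_or_le x hx with rfl | hjx
    · exact Or.inl rfl
    rcases hjx.eq_or_lt with rfl | hjx
    · exact Or.inr (Or.inl rfl)
    obtain ⟨T, hTx, hTS⟩ := hinside x hjx
    exact Or.inr (Or.inr ⟨hjx, hTS (not_disjoint_iff.2 ⟨x, hTx.secondMin_mem, hx⟩) hTx.min_mem⟩)
  · rintro (rfl | rfl | ⟨hjx, hfx⟩)
    · exact hSj.min_mem
    · exact hSj.secondMin_mem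
    · obtain ⟨T, hTx, hTS⟩ := hinside x hjx
      exact hTS (not_disjoint_iff.2 ⟨f x, hTx.min_mem, hfx⟩) hTx.secondMin_mem

/-- The member of `F` with second smallest element `j` obeys the recursion of `mem_block_iff`,
so it is `block f j`; maximality of `blockFamily f` does the rest. -/
theorem GoodLaminar.eq_blockFamily {F : Finset (Finset (Fin n))} (hF : GoodLaminar n F)
    (hf : IsParentMap f) (hFf : F.image minTwo = parentEdges f) :
    F = blockFamily f := by
  have hmem : ∀ j : Fin n, j.val ≠ 0 → ∃ S ∈ F, IsMinTwo S (f j) j := by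
    intro j hj
    obtain ⟨S, hS, hSj⟩ := mem_image.1 (hFf ▸ mem_parentEdges.2 ⟨j, hj, rfl⟩)
    exact ⟨S, hS, isMinTwo_of_minTwo_eq (hF.2 S hS) (hf j hj) hSj⟩
  have hblock : blockFamily f ⊆ F := by
    simp only [blockFamily, subset_iff, mem_image, mem_filter, mem_univ, true_and,
      forall_exists_index, and_imp, forall_apply_eq_imp_iff₂]
    intro j hj
    obtain ⟨S, hS, hSj⟩ := hmem j hj
    rwa [← eq_block_of_forall_mem_iff hf hj (hF.1.mem_iff_of_isMinTwo hS hSj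
      fun x hjx => hmem x (Fin.val_ne_zero_of_lt hjx))]
  exact (maxGoodLaminar_blockFamily hf).2 F hF hblock

end BlockFamily

section SpanningTree

variable {n : ℕ} {f : Fin n → Fin n}

lemma edgeSet_graphOf_parentEdges (hf : IsParentMap f) :
    (graphOf (parentEdges f)).edgeSet = (fun j => s(f j, j)) '' {j | j.val ≠ 0} := by
  ext e
  induction e using Sym2.ind with
  | _ x y =>
    simp only [SimpleGraph.mem_edgeSet, Set.mem_image, Set.mem_ofPred_eq]
    show (x ≠ y ∧ ∃ e ∈ parentEdges f, x ∈ e ∧ y ∈ e) ↔ _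
    simp only [mem_parentEdges]
    constructor
    · rintro ⟨hxy, _, ⟨j, hj, rfl⟩, hx, hy⟩
      refine ⟨j, hj, ?_⟩
      rw [mem_insert, mem_singleton] at hx hy
      rcases hx with rfl | rfl <;> rcases hy with rfl | rfl
      exacts [absurd rfl hxy, rfl, Sym2.eq_swap, absurd rfl hxy]
    · rintro ⟨j, hj, h⟩
      refine ⟨?_, {f j, j}, ⟨j, hj, rfl⟩, ?_⟩
      all_goals rcases Sym2.eq_iff.1 h with ⟨rfl, rfl⟩ | ⟨rfl, rfl⟩
      exacts [(hf j hj).ne, (hf j hj).ne', by simp, by simp]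

lemma reachable_graphOf_parentEdges (hf : IsParentMap f) (x : Fin n) :
    (graphOf (parentEdges f)).Reachable x ⟨0, x.pos⟩ := by
  induction x using WellFoundedLT.induction with
  | _ x ih =>
    by_cases hx : x.val = 0
    · exact (Fin.ext hx : x = ⟨0, x.pos⟩) ▸ SimpleGraph.Reachable.refl x
    have hadj : (graphOf (parentEdges f)).Adj x (f x) := by
      rw [← SimpleGraph.mem_edgeSet, edgeSet_graphOf_parentEdges hf]
      exact ⟨x, hx, Sym2.eq_swap⟩
    exact hadj.reachable.trans (ih (f x) (hf x hx))

lemma isTree_graphOf_parentEdges (hf : IsParentMap f) (hn : 0 < n) :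
    (graphOf (parentEdges f)).IsTree := by
  have hconn : (graphOf (parentEdges f)).Connected := by
    have : Nonempty (Fin n) := ⟨⟨0, hn⟩⟩
    exact SimpleGraph.Connected.mk fun x y =>
      (reachable_graphOf_parentEdges hf x).trans (reachable_graphOf_parentEdges hf y).symm
  refine SimpleGraph.isTree_iff_connected_and_card.2 ⟨hconn, ?_⟩
  have hinj : Set.InjOn (fun j => s(f j, j)) {j : Fin n | j.val ≠ 0} := by
    intro i hi j hj hij
    rcases Sym2.eq_iff.1 hij with ⟨-, h⟩ | ⟨h, h'⟩
    · exact h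
    · exact absurd ((hf j hj).trans (h' ▸ h ▸ hf i hi)) (lt_irrefl _)
  rw [edgeSet_graphOf_parentEdges hf, Nat.card_coe_set_eq, hinj.ncard_image,
    ← coe_filter_univ, Set.ncard_coe_finset, card_filter_val_ne_zero, Nat.card_eq_fintype_card,
    Fintype.card_fin]
  omega

lemma isSpanningTree_parentEdges (hf : IsParentMap f) (hn : 0 < n) :
    IsSpanningTree n (parentEdges f) := by
  have hT := isTree_graphOf_parentEdges hf hn
  refine ⟨fun e he => ?_, card_parentEdges hf, hT.connected, hT.isAcyclic⟩
  obtain ⟨j, hj, rfl⟩ := mem_parentEdges.1 he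
  exact card_pair (hf j hj).ne

end SpanningTree

/-- For `n ≥ 2`, the map `Φ : F ↦ {{min S, secondmin S} : S ∈ F}` restricts to a bijection
from the proper maximal laminar families (maximal laminar families of subsets of `[n]` with
members of cardinality `≥ 2` for which `Φ(F)` is a spanning tree of `K_n`) onto the set of
edge sets of the form `{{f j, j} : j ≠ 0}` with `f j < j`, i.e. the no broken circuit bases
of `Π_n` with respect to the lexicographic atom order. -/
theorem phi_bijOn_proper_nbc (n : ℕ) (hn : 2 ≤ n) :
    Set.BijOn (fun F : Finset (Finset (Fin n)) => F.image minTwo)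
      {F | MaxGoodLaminar n F ∧ IsSpanningTree n (F.image minTwo)}
      {E | ∃ f : Fin n → Fin n, (∀ j : Fin n, j.val ≠ 0 → f j < j) ∧
        E = (Finset.univ.filter (fun j : Fin n => j.val ≠ 0)).image
              (fun j => ({f j, j} : Finset (Fin n)))} := by
  refine ⟨?_, ?_, ?_⟩
  · rintro F ⟨⟨hF, -⟩, hFT⟩
    exact hF.1.exists_image_minTwo_eq_parentEdges hF.2 hFT.2.1.ge
  · rintro F ⟨⟨hF, -⟩, hFT⟩ G ⟨⟨hG, -⟩, -⟩ hFG
    obtain ⟨f, hf, hFf⟩ := hF.1.exists_image_minTwo_eq_parentEdges hF.2 hFT.2.1.ge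
    rw [hF.eq_blockFamily hf hFf, hG.eq_blockFamily hf (hFG.symm.trans hFf)]
  · rintro E ⟨f, hf, rfl⟩
    refine ⟨blockFamily f, ⟨maxGoodLaminar_blockFamily hf, ?_⟩, image_minTwo_blockFamily hf⟩
    rw [image_minTwo_blockFamily hf]
    exact isSpanningTree_parentEdges hf (by omega)
end

section
/- Let n > k ≥ 2. The set Π_{n,k} of all partitions of [n] in which every non-singleton block has cardinality at least k is closed under (arbitrary) joins in the partition lattice Π_n, and Π_{n,k} equals the sub-join-semilattice of Π_n generated by ⊥ together with all partitions π_S with S ⊆ [n], |S| = k; in particular Π_{n,k}, with the order induced from Π_n, is a lattice (the k-equal lattice). -/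
/-- `s` belongs to the `k`-equal family: every non-singleton block has cardinality `≥ k`. -/
def KEqual (n k : ℕ) (s : Setoid (Fin n)) : Prop :=
  ∀ B ∈ s.classes, B.Nontrivial → k ≤ B.ncard

lemma eqvGen_chain {α : Type*} (r : α → α → Prop) {x y : α} (h : Relation.EqvGen r x y) :
    x ≠ y → ∃ a b, a ≠ b ∧ r a b ∧ Relation.EqvGen r x a := by
  induction h with
  | rel a b hab => intro hne; exact ⟨a, b, hne, hab, Relation.EqvGen.refl a⟩
  | refl a => intro hne; exact absurd rfl hne
  | symm a b h ih =>
    intro hne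
    obtain ⟨u, v, huv, hr, hchain⟩ := ih (Ne.symm hne)
    exact ⟨u, v, huv, hr, (Relation.EqvGen.symm _ _ h).trans _ _ _ hchain⟩
  | trans a b c hab hbc ih1 ih2 =>
    intro hne
    by_cases hab' : a = b
    · subst hab'
      obtain ⟨u, v, huv, hr, hchain⟩ := ih2 hne
      exact ⟨u, v, huv, hr, hchain⟩
    · obtain ⟨u, v, huv, hr, hchain⟩ := ih1 hab'
      exact ⟨u, v, huv, hr, hchain⟩

lemma kEqual_sSup (n k : ℕ) (T : Set (Setoid (Fin n)))
    (hT : ∀ s ∈ T, KEqual n k s) : KEqual n k (sSup T) := by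
  rintro B ⟨y, rfl⟩ ⟨x, hx, x', hx', hxx'⟩
  -- x, x' are distinct elements related to y under sSup T
  have hrel : (sSup T) x y := hx
  -- x related to x'
  have hxy' : (sSup T) x x' := (sSup T).trans' hx ((sSup T).symm' hx')
  have hEq : Relation.EqvGen (fun a b => ∃ r : Setoid (Fin n), r ∈ T ∧ r a b) x x' := by
    have := Setoid.sSup_eq_eqvGen T
    rw [this] at hxy'
    exact hxy'
  obtain ⟨a, b, hab, ⟨s, hsT, hsab⟩, hchain⟩ := eqvGen_chain _ hEq hxx'
  -- the s-class of a (as a class of s) is nontrivial, so has ncard ≥ k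
  have hclass : k ≤ ({z | s z a} : Set (Fin n)).ncard := by
    apply hT s hsT _ (s.mem_classes a)
    exact ⟨b, s.symm' hsab, a, s.refl' a, fun h => hab (h.symm)⟩
  -- this class is contained in B
  have hsub : ({z | s z a} : Set (Fin n)) ⊆ {z | (sSup T) z y} := by
    intro z hz
    have h1 : (sSup T) z a := Setoid.le_def.mp (le_sSup hsT) hz
    have h2 : (sSup T) x a := by
      rw [Setoid.sSup_eq_eqvGen T]; exact hchain
    exact (sSup T).trans' h1 ((sSup T).trans' ((sSup T).symm' h2) hrel)
  exact le_trans hclass (Set.ncard_le_ncard hsub (Set.toFinite _))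

/-- For `n > k ≥ 2`, the set `Π_{n,k}` of partitions of `[n]` whose non-singleton blocks all
have cardinality `≥ k` is closed under arbitrary joins in the partition lattice `Π_n`, and it
equals the sub-join-semilattice of `Π_n` generated by `⊥` together with the partitions `π_S`
with `|S| = k` (the elements expressible as joins of such generators); in particular it is a
lattice. -/
theorem kEqual_join_closed_and_generated (n k : ℕ) (hk : 2 ≤ k) (hn : k < n) :
    (∀ T : Set (Setoid (Fin n)), (∀ s ∈ T, KEqual n k s) → KEqual n k (sSup T)) ∧
    {s : Setoid (Fin n) | KEqual n k s} =
      {s : Setoid (Fin n) | ∃ G : Set (Setoid (Fin n)),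
        (∀ g ∈ G, g = ⊥ ∨ ∃ S : Finset (Fin n), S.card = k ∧ g = piS n ↑S) ∧ s = sSup G} := by
  refine ⟨kEqual_sSup n k, ?_⟩
  ext s
  simp only [Set.mem_setOf_eq]
  constructor
  · intro hs
    set G : Set (Setoid (Fin n)) :=
      {g | (g = ⊥ ∨ ∃ S : Finset (Fin n), S.card = k ∧ g = piS n ↑S) ∧ g ≤ s} with hGdef
    refine ⟨G, fun g hg => hg.1, ?_⟩
    apply le_antisymm
    · -- s ≤ sSup G
      rw [Setoid.le_def]
      intro x y hxy
      by_cases hxyeq : x = y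
      · subst hxyeq; exact (sSup G).refl' x
      · -- find a k-subset of the class of y containing x and y
        set B : Set (Fin n) := {z | s z y} with hB
        have hBfin : B.Finite := Set.toFinite B
        have hxB : x ∈ B := hxy
        have hyB : y ∈ B := s.refl' y
        have hBcard : k ≤ B.ncard :=
          hs B (s.mem_classes y) ⟨x, hxB, y, hyB, hxyeq⟩
        have hsubfin : ({x, y} : Finset (Fin n)) ⊆ hBfin.toFinset := by
          intro z hz
          simp only [Finset.mem_insert, Finset.mem_singleton] at hz
          rcases hz with rfl | rfl <;> simp [Set.Finite.mem_toFinset, hxB, hyB]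
        have hcard2 : ({x, y} : Finset (Fin n)).card ≤ k :=
          le_trans ((Finset.card_insert_le _ _).trans (by simp)) hk
        have hBt : k ≤ hBfin.toFinset.card := by
          rwa [Set.ncard_eq_toFinset_card B hBfin] at hBcard
        obtain ⟨S, hS1, hS2, hS3⟩ :=
          Finset.exists_subsuperset_card_eq hsubfin hcard2 hBt
        have hpiS : piS n ↑S ≤ s := by
          rw [Setoid.le_def]
          rintro a b (rfl | ⟨ha, hb⟩)
          · exact s.refl' a
          · have ha' : s a y := by
              have := hS2 ha; rw [Set.Finite.mem_toFinset] at this; exact this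
            have hb' : s b y := by
              have := hS2 hb; rw [Set.Finite.mem_toFinset] at this; exact this
            exact s.trans' ha' (s.symm' hb')
        have hmem : piS n (↑S : Set (Fin n)) ∈ G := ⟨Or.inr ⟨S, hS3, rfl⟩, hpiS⟩
        have hle : piS n (↑S : Set (Fin n)) ≤ sSup G := le_sSup hmem
        apply Setoid.le_def.mp hle
        exact Or.inr ⟨by simpa using hS1 (Finset.mem_insert_self x {y}),
          by simpa using hS1 (by simp)⟩
    · exact sSup_le fun g hg => hg.2
  · rintro ⟨G, hG, rfl⟩
    apply kEqual_sSup
    intro g hg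
    rcases hG g hg with rfl | ⟨S, hScard, rfl⟩
    · -- ⊥ is KEqual: all classes are singletons
      rintro B ⟨y, rfl⟩ ⟨a, ha, b, hb, hab⟩
      exfalso
      have ha' : a = y := ha
      have hb' : b = y := hb
      exact hab (ha'.trans hb'.symm)
    · -- piS of a k-set is KEqual
      rintro B ⟨y, rfl⟩ ⟨a, ha, b, hb, hab⟩
      have hyS : y ∈ (↑S : Set (Fin n)) := by
        rcases ha with rfl | ⟨_, hy⟩
        · rcases hb with hb | ⟨_, hy⟩
          · exact absurd hb.symm hab
          · exact hy
        · exact hy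
      have hBeq : {x | (piS n ↑S) x y} = (↑S : Set (Fin n)) := by
        ext z
        constructor
        · rintro (rfl | ⟨hz, _⟩)
          · exact hyS
          · exact hz
        · intro hz; exact Or.inr ⟨hz, hyS⟩
      rw [hBeq, Set.ncard_coe_finset, hScard]
end

section
/- Let n > k ≥ 2 and let F be a laminar family of subsets of [n], all members of cardinality at least k. Then F is maximal with respect to inclusion among such laminar families if and only if [n] ∈ F and for every T ∈ F the following holds, where C(T) denotes the set of inclusion-maximal members of F properly contained in T and R(T) := T \ ⋃C(T): either C(T) = ∅ and |T| = k, or |C(T)| + |R(T)| = 2. (This is the combinatorial content of the identification of the complex of k-equal trees T_{n,k} — rooted trees that are binary except at preleaves, where they are k-ary — with the reduced minimal nested set complex of the k-equal lattice Π_{n,k}.) -/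
/-- `C(T)`: the inclusion-maximal members of `F` properly contained in `T`. -/
def Cset {n : ℕ} (F : Finset (Finset (Fin n))) (T : Finset (Fin n)) :
    Set (Finset (Fin n)) :=
  {S | S ∈ F ∧ S ⊂ T ∧ ∀ S' ∈ F, S' ⊂ T → ¬ S ⊂ S'}

/-- `R(T) = T \ ⋃ C(T)`: the elements of `T` not covered by the maximal proper members. -/
def Rset {n : ℕ} (F : Finset (Finset (Fin n))) (T : Finset (Fin n)) : Set (Fin n) :=
  ↑T \ ⋃ S ∈ Cset F T, (↑S : Set (Fin n))

lemma cset_finite {n : ℕ} (F : Finset (Finset (Fin n))) (T : Finset (Fin n)) :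
    (Cset F T).Finite :=
  F.finite_toSet.subset (fun _ hS => hS.1)

lemma rset_finite {n : ℕ} (F : Finset (Finset (Fin n))) (T : Finset (Fin n)) :
    (Rset F T).Finite :=
  T.finite_toSet.subset (fun _ hx => hx.1)

lemma exists_cset {n : ℕ} {F : Finset (Finset (Fin n))} {T S : Finset (Fin n)}
    (hS : S ∈ F) (hST : S ⊂ T) : ∃ M ∈ Cset F T, S ⊆ M := by
  classical
  obtain ⟨M, hMP, hmaxM⟩ := Finset.exists_max_image
    (F.filter fun S' => S ⊆ S' ∧ S' ⊂ T) Finset.card ⟨S, by simp [hS, hST]⟩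
  simp only [Finset.mem_filter] at hMP
  refine ⟨M, ⟨hMP.1, hMP.2.2, ?_⟩, hMP.2.1⟩
  intro S' hS' hS'T hMS'
  have h1 := hmaxM S' (Finset.mem_filter.2 ⟨hS', hMP.2.1.trans hMS'.subset, hS'T⟩)
  have h2 := Finset.card_lt_card hMS'
  omega

lemma cset_disjoint {n : ℕ} {F : Finset (Finset (Fin n))} {T M₁ M₂ : Finset (Fin n)}
    (hlam : Laminar F) (h1 : M₁ ∈ Cset F T) (h2 : M₂ ∈ Cset F T) (hne : M₁ ≠ M₂) :
    Disjoint M₁ M₂ := by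
  rcases hlam M₁ h1.1 M₂ h2.1 with h | h | h
  · exact absurd (lt_of_le_of_ne h hne) (h1.2.2 M₂ h2.1 h2.2.1)
  · exact absurd (lt_of_le_of_ne h hne.symm) (h2.2.2 M₁ h1.1 h1.2.1)
  · exact h

lemma compat {n : ℕ} {F : Finset (Finset (Fin n))} (hlam : Laminar F) {T : Finset (Fin n)}
    (hT : T ∈ F) {S : Finset (Fin n)} (hST : S ⊆ T)
    (hC : ∀ M ∈ Cset F T, M ⊆ S ∨ Disjoint M S) :
    ∀ U ∈ F, S ⊆ U ∨ U ⊆ S ∨ Disjoint S U := by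
  intro U hU
  rcases hlam U hU T hT with h | h | h
  · rcases eq_or_ne U T with rfl | hne
    · exact Or.inl hST
    · obtain ⟨M, hM, hUM⟩ := exists_cset hU (lt_of_le_of_ne h hne)
      rcases hC M hM with h' | h'
      · exact Or.inr (Or.inl (hUM.trans h'))
      · exact Or.inr (Or.inr ((h'.mono_left hUM).symm))
  · exact Or.inl (hST.trans h)
  · exact Or.inr (Or.inr (h.mono_right hST).symm)

lemma laminar_insert {n : ℕ} {F : Finset (Finset (Fin n))} {S : Finset (Fin n)}
    (hlam : Laminar F) (h : ∀ U ∈ F, S ⊆ U ∨ U ⊆ S ∨ Disjoint S U) :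
    Laminar (insert S F) := by
  intro U hU V hV
  rcases Finset.mem_insert.1 hU with hU' | hU' <;> rcases Finset.mem_insert.1 hV with hV' | hV'
  · subst hU'; subst hV'; exact Or.inl subset_rfl
  · subst hU'; exact h V hV'
  · subst hV'
    rcases h U hU' with h' | h' | h'
    · exact Or.inr (Or.inl h')
    · exact Or.inl h'
    · exact Or.inr (Or.inr h'.symm)
  · exact hlam U hU' V hV'


/-- Let `n > k ≥ 2` and let `F` be a laminar family of subsets of `[n]`, all members of
cardinality `≥ k`.  Then `F` is maximal among such laminar families if and only if `[n] ∈ F`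
and, for every `T ∈ F`, either `C(T) = ∅` and `|T| = k`, or `|C(T)| + |R(T)| = 2`.
(This identifies the complex of `k`-equal trees with the reduced minimal nested set complex
of the `k`-equal lattice.) -/
theorem maximal_iff_kEqual_tree (n k : ℕ) (hk : 2 ≤ k) (hn : k < n)
    (F : Finset (Finset (Fin n))) (hlam : Laminar F) (hcard : ∀ S ∈ F, k ≤ S.card) :
    (∀ G : Finset (Finset (Fin n)), Laminar G → (∀ S ∈ G, k ≤ S.card) → F ⊆ G → G = F) ↔
    (Finset.univ ∈ F ∧ ∀ T ∈ F,
      (Cset F T = ∅ ∧ T.card = k) ∨ (Cset F T).ncard + (Rset F T).ncard = 2) := by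
  classical
  constructor
  · intro hmax
    -- key insertion principle
    have hins : ∀ S : Finset (Fin n), k ≤ S.card →
        (∀ U ∈ F, S ⊆ U ∨ U ⊆ S ∨ Disjoint S U) → S ∈ F := by
      intro S hkS hc
      have hcards : ∀ U ∈ insert S F, k ≤ U.card := by
        intro U hU
        rcases Finset.mem_insert.1 hU with rfl | hU
        exacts [hkS, hcard U hU]
      have heq := hmax _ (laminar_insert hlam hc) hcards (Finset.subset_insert _ _)
      rw [← heq]; exact Finset.mem_insert_self _ _
    have huniv : Finset.univ ∈ F := by
      refine hins _ ?_ (fun U hU => Or.inr (Or.inl (Finset.subset_univ U)))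
      simpa using hn.le
    refine ⟨huniv, fun T hT => ?_⟩
    have hfinC := cset_finite F T
    have hfinR := rset_finite F T
    rcases Set.eq_empty_or_nonempty (Cset F T) with hCe | hCne
    · left
      refine ⟨hCe, ?_⟩
      by_contra hTk
      have hk' : k < T.card := lt_of_le_of_ne (hcard T hT) (Ne.symm hTk)
      obtain ⟨S, hSsub, hScard⟩ := Finset.exists_subset_card_eq hk'.le
      have hSssub : S ⊂ T := lt_of_le_of_ne hSsub (fun h => by rw [h] at hScard; omega)
      have hSF : S ∈ F := hins S (by omega)
        (compat hlam hT hSsub (fun M hM => by rw [hCe] at hM; exact hM.elim))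
      obtain ⟨M, hM, _⟩ := exists_cset hSF hSssub
      rw [hCe] at hM; exact hM
    · right
      -- lower bound
      obtain ⟨A0, hA0⟩ := hCne
      obtain ⟨x, hxT, hxA0⟩ := Finset.exists_of_ssubset hA0.2.1
      have h1C : 0 < (Cset F T).ncard := (Set.ncard_pos hfinC).2 ⟨A0, hA0⟩
      have hlb : 2 ≤ (Cset F T).ncard + (Rset F T).ncard := by
        by_cases hx : ∃ M ∈ Cset F T, x ∈ M
        · obtain ⟨M, hM, hxM⟩ := hx
          have hMA : M ≠ A0 := fun h => hxA0 (h ▸ hxM)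
          have : 1 < (Cset F T).ncard := (Set.one_lt_ncard_iff hfinC).2 ⟨M, A0, hM, hA0, hMA⟩
          omega
        · have hxR : x ∈ Rset F T := ⟨hxT, by simpa using hx⟩
          have : 0 < (Rset F T).ncard := (Set.ncard_pos hfinR).2 ⟨x, hxR⟩
          omega
      -- upper bound
      have hub : ¬ 3 ≤ (Cset F T).ncard + (Rset F T).ncard := by
        intro h3
        rcases le_or_gt 2 (Cset F T).ncard with h2C | h2C
        · obtain ⟨A, B, hA, hB, hAB⟩ := (Set.one_lt_ncard_iff hfinC).1 h2C
          have hAne : A.Nonempty := Finset.card_pos.1 (lt_of_lt_of_le (by omega) (hcard A hA.1))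
          have hBne : B.Nonempty := Finset.card_pos.1 (lt_of_lt_of_le (by omega) (hcard B hB.1))
          have hcover : ¬ (↑T : Set (Fin n)) ⊆ ↑A ∪ ↑B := by
            intro hcov
            have hRe : Rset F T = ∅ := by
              ext y
              simp only [Set.mem_empty_iff_false, iff_false]
              intro hy
              rcases hcov hy.1 with h | h
              · exact hy.2 (Set.mem_biUnion hA h)
              · exact hy.2 (Set.mem_biUnion hB h)
            have hCsub : Cset F T ⊆ {A, B} := by
              intro M hM
              have hMne : M.Nonempty := Finset.card_pos.1 (lt_of_lt_of_le (by omega) (hcard M hM.1))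
              obtain ⟨y, hy⟩ := hMne
              rcases eq_or_ne M A with rfl | h1
              · exact Or.inl rfl
              rcases eq_or_ne M B with rfl | h2
              · exact Or.inr rfl
              have d1 := cset_disjoint hlam hM hA h1
              have d2 := cset_disjoint hlam hM hB h2
              rcases hcov (hM.2.1.subset hy) with h | h
              · exact absurd h (Finset.disjoint_left.1 d1 hy)
              · exact absurd h (Finset.disjoint_left.1 d2 hy)
            have h1 : (Cset F T).ncard ≤ 2 := by
              have := Set.ncard_le_ncard hCsub ((Set.finite_singleton B).insert A)
              rwa [Set.ncard_pair hAB] at this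
            rw [hRe, Set.ncard_empty] at h3
            omega
          obtain ⟨z, hzT, hzAB⟩ := Set.not_subset.1 hcover
          have hST : A ∪ B ⊆ T := Finset.union_subset hA.2.1.subset hB.2.1.subset
          have hzAB' : z ∉ A ∪ B := by
            simp only [Set.mem_union, Finset.mem_coe] at hzAB
            simpa [Finset.mem_union] using hzAB
          have hSsT : A ∪ B ⊂ T :=
            (Finset.ssubset_iff_of_subset hST).2 ⟨z, hzT, hzAB'⟩
          have hCcomp : ∀ M ∈ Cset F T, M ⊆ A ∪ B ∨ Disjoint M (A ∪ B) := by
            intro M hM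
            rcases eq_or_ne M A with rfl | h1
            · exact Or.inl Finset.subset_union_left
            rcases eq_or_ne M B with rfl | h2
            · exact Or.inl Finset.subset_union_right
            · exact Or.inr (Finset.disjoint_union_right.2
                ⟨cset_disjoint hlam hM hA h1, cset_disjoint hlam hM hB h2⟩)
          have hSF : A ∪ B ∈ F := hins _
            (le_trans (hcard A hA.1) (Finset.card_le_card Finset.subset_union_left))
            (compat hlam hT hST hCcomp)
          obtain ⟨M, hM, hSM⟩ := exists_cset hSF hSsT
          have hAM : A = M := by
            by_contra h
            obtain ⟨a, ha⟩ := hAne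
            exact Finset.disjoint_left.1 (cset_disjoint hlam hA hM h) ha
              (hSM (Finset.mem_union_left _ ha))
          have hBM : B = M := by
            by_contra h
            obtain ⟨b, hb⟩ := hBne
            exact Finset.disjoint_left.1 (cset_disjoint hlam hB hM h) hb
              (hSM (Finset.mem_union_right _ hb))
          exact hAB (hAM.trans hBM.symm)
        · -- Cset has exactly one element, Rset has ≥ 2
          have h1C' : (Cset F T).ncard = 1 := by omega
          obtain ⟨A, hAeq⟩ := Set.ncard_eq_one.1 h1C'
          have hA : A ∈ Cset F T := by rw [hAeq]; rfl
          have h2R : 1 < (Rset F T).ncard := by omega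
          obtain ⟨r, r', hr, hr', hrr'⟩ := (Set.one_lt_ncard_iff hfinR).1 h2R
          have hrT : r ∈ T := hr.1
          have hrA : r ∉ A := fun h => hr.2 (Set.mem_biUnion hA h)
          have hr'A : r' ∉ A := fun h => hr'.2 (Set.mem_biUnion hA h)
          have hST : insert r A ⊆ T := Finset.insert_subset hrT hA.2.1.subset
          have hSsT : insert r A ⊂ T := (Finset.ssubset_iff_of_subset hST).2
            ⟨r', hr'.1, by simp [hr'A, hrr'.symm]⟩
          have hCcomp : ∀ M ∈ Cset F T, M ⊆ insert r A ∨ Disjoint M (insert r A) := by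
            intro M hM
            rw [hAeq] at hM
            rw [hM]
            exact Or.inl (Finset.subset_insert _ _)
          have hSF : insert r A ∈ F := hins _
            (le_trans (hcard A hA.1) (Finset.card_le_card (Finset.subset_insert _ _)))
            (compat hlam hT hST hCcomp)
          obtain ⟨M, hM, hSM⟩ := exists_cset hSF hSsT
          rw [hAeq] at hM
          rw [hM] at hSM
          exact hrA (hSM (Finset.mem_insert_self _ _))
      omega
  · rintro ⟨huniv, hstruct⟩ G hGlam hGcard hFG
    refine Finset.Subset.antisymm ?_ hFG
    intro A hA
    by_contra hAF
    obtain ⟨T, hTmem, hTmin⟩ := Finset.exists_min_image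
      (F.filter fun T => A ⊆ T) Finset.card ⟨Finset.univ, by simp [huniv]⟩
    rw [Finset.mem_filter] at hTmem
    obtain ⟨hTF, hAT⟩ := hTmem
    have hAsT : A ⊂ T := lt_of_le_of_ne hAT (fun h => hAF (h ▸ hTF))
    have hkey : ∀ M ∈ Cset F T, M ⊆ A ∨ Disjoint M A := by
      intro M hM
      rcases hGlam M (hFG hM.1) A hA with h | h | h
      · exact Or.inl h
      · exfalso
        have h1 := hTmin M (Finset.mem_filter.2 ⟨hM.1, h⟩)
        have h2 := Finset.card_lt_card hM.2.1
        omega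
      · exact Or.inr h
    have hAk := hGcard A hA
    have hAne : A.Nonempty := Finset.card_pos.1 (by omega)
    rcases hstruct T hTF with ⟨hCe, hTk⟩ | hsum
    · have := Finset.card_lt_card hAsT
      omega
    · have hfinC := cset_finite F T
      have hfinR := rset_finite F T
      have hcover : ∀ x ∈ T, (∃ M ∈ Cset F T, x ∈ M) ∨ x ∈ Rset F T := by
        intro x hx
        by_cases h : ∃ M ∈ Cset F T, x ∈ M
        · exact Or.inl h
        · exact Or.inr ⟨hx, by simpa using h⟩
      rcases (by omega :
          (Cset F T).ncard = 0 ∨ (Cset F T).ncard = 1 ∨ (Cset F T).ncard = 2) with h0 | h1 | h2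
      · -- Cset empty: T = Rset, so |T| = 2 ≤ k, contradiction with A ⊂ T, |A| ≥ k
        have hCe : Cset F T = ∅ := (Set.ncard_eq_zero hfinC).1 h0
        have hTR : (↑T : Set (Fin n)) ⊆ Rset F T := by
          intro x hx
          rcases hcover x hx with ⟨M, hM, _⟩ | h
          · rw [hCe] at hM; exact hM.elim
          · exact h
        have hTle : T.card ≤ 2 := by
          have := Set.ncard_le_ncard hTR hfinR
          rw [Set.ncard_coe_finset] at this
          omega
        have := Finset.card_lt_card hAsT
        omega
      · -- Cset = {S}
        obtain ⟨S, hSeq⟩ := Set.ncard_eq_one.1 h1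
        have hS : S ∈ Cset F T := by rw [hSeq]; rfl
        have hR1 : (Rset F T).ncard = 1 := by omega
        have hcover' : ∀ x ∈ T, x ∈ S ∨ x ∈ Rset F T := by
          intro x hx
          rcases hcover x hx with ⟨M, hM, hxM⟩ | h
          · rw [hSeq] at hM; rw [hM] at hxM; exact Or.inl hxM
          · exact Or.inr h
        rcases hkey S hS with hSA | hSA
        · -- S ⊆ A : show A = S ∈ F
          obtain ⟨x, hxT, hxA⟩ := Finset.exists_of_ssubset hAsT
          have hxR : x ∈ Rset F T := by
            rcases hcover' x hxT with h | h
            · exact absurd (hSA h) hxA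
            · exact h
          have hAS : A ⊆ S := by
            intro a ha
            rcases hcover' a (hAT ha) with h | h
            · exact h
            · exfalso
              have hxa : x ≠ a := fun he => hxA (he ▸ ha)
              have : 1 < (Rset F T).ncard :=
                (Set.one_lt_ncard_iff hfinR).2 ⟨x, a, hxR, h, hxa⟩
              omega
          exact hAF ((Finset.Subset.antisymm hAS hSA) ▸ hS.1)
        · -- Disjoint S A : A ⊆ Rset, so |A| ≤ 1 < k
          have hAR : (↑A : Set (Fin n)) ⊆ Rset F T := by
            intro a ha
            rcases hcover' a (hAT ha) with h | h
            · exact absurd ha (Finset.disjoint_left.1 hSA h)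
            · exact h
          have := Set.ncard_le_ncard hAR hfinR
          rw [Set.ncard_coe_finset] at this
          omega
      · -- Cset = {S₁, S₂}
        obtain ⟨S₁, S₂, hS12, hCeq⟩ := Set.ncard_eq_two.1 h2
        have hS1 : S₁ ∈ Cset F T := by rw [hCeq]; exact Set.mem_insert _ _
        have hS2 : S₂ ∈ Cset F T := by rw [hCeq]; exact Set.mem_insert_of_mem _ rfl
        have hR0 : Rset F T = ∅ := (Set.ncard_eq_zero hfinR).1 (by omega)
        have hcover' : ∀ x ∈ T, x ∈ S₁ ∨ x ∈ S₂ := by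
          intro x hx
          rcases hcover x hx with ⟨M, hM, hxM⟩ | h
          · rw [hCeq] at hM
            rcases hM with rfl | hM
            · exact Or.inl hxM
            · rw [Set.mem_singleton_iff] at hM
              rw [hM] at hxM; exact Or.inr hxM
          · rw [hR0] at h; exact h.elim
        rcases hkey S₁ hS1 with h1A | h1A <;> rcases hkey S₂ hS2 with h2A | h2A
        · -- both ⊆ A: T ⊆ A, contradiction
          refine absurd (fun x hx => ?_ : T ⊆ A) hAsT.2
          rcases hcover' x hx with h | h
          exacts [h1A h, h2A h]
        · -- S₁ ⊆ A, S₂ disjoint from A: A = S₁ ∈ F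
          have hAS : A ⊆ S₁ := by
            intro a ha
            rcases hcover' a (hAT ha) with h | h
            · exact h
            · exact absurd ha (Finset.disjoint_left.1 h2A h)
          exact hAF ((Finset.Subset.antisymm hAS h1A) ▸ hS1.1)
        · have hAS : A ⊆ S₂ := by
            intro a ha
            rcases hcover' a (hAT ha) with h | h
            · exact absurd ha (Finset.disjoint_left.1 h1A h)
            · exact h
          exact hAF ((Finset.Subset.antisymm hAS h2A) ▸ hS2.1)
        · obtain ⟨a, ha⟩ := hAne
          rcases hcover' a (hAT ha) with h | h
          · exact Finset.disjoint_left.1 h1A h ha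
          · exact Finset.disjoint_left.1 h2A h ha
end
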